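/- arXiv:1908.00025 — 6 statements merged into one kernel-verified Lean document; each statement's English description precedes it below -/
import Mathlib

section
/- Let B_ss ⊆ B_s ⊆ B_w be normed spaces of signed Borel measures on a compact metric space X with ‖·‖_w ≤ ‖·‖_s ≤ ‖·‖_ss, and let V_i denote the subspace of zero-total-mass elements of B_i. Suppose (L_δ)_{δ∈[0,δ̄)} is a family of bounded Markov operators on each B_i such that: (LR1) each L_δ has a fixed probability measure h_δ ∈ B_ss with ‖h_δ‖_ss ≤ M uniformly; (LR2) there is a sequence a_n → 0 with ‖L_0^n g‖_s ≤ a_n ‖g‖_ss for all g ∈ V_ss; (LR3) the resolvent (Id − L_0)^{-1} = Σ_{i≥0} L_0^i is a bounded operator V_w → V_w; (LR4) ‖L_0 − L_δ‖_{B_s→B_w} ≤ Kδ, ‖L_0 − L_δ‖_{B_ss→B_s} ≤ Kδ, and there exists L̇h_0 ∈ V_w with ‖(L_δ − L_0)h_0/δ − L̇h_0‖_w → 0 as δ → 0. Then ‖(h_δ − h_0)/δ − (Id − L_0)^{-1} L̇h_0‖_w → 0 as δ → 0. -/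
open Filter Topology Set
open Function (IsFixedPt)

/-! With `g = h_δ - h_0`, the two fixed-point equations give
`(Id - L₀) g = (L_δ - L₀) h_0 + (L_δ - L₀) g`, and `g` has zero mass, so applying the resolvent
`R = (Id - L₀)⁻¹`,  `g / δ - R L̇h₀ = R ((L_δ - L₀) h_0 / δ - L̇h₀) + R ((L_δ - L₀) g / δ)`.
The first term tends to `0` by (LR4), and the second is `O(‖g‖_s)` in the weak norm by the
`B_s → B_w` bound, so it suffices that `h_δ → h_0` in `B_s`. For that, split
`g = L₀ᴺ g + ∑_{k<N} L₀ᵏ (h_δ - L₀ h_δ)`: the first part is at most `2 M |a_N|` by (LR2), and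
`h_δ - L₀ h_δ = (L_δ - L₀) h_δ` is `O(δ)` by the `B_ss → B_s` bound, so for fixed `N` the second
part vanishes as `δ → 0`. -/

theorem hasSum_pow_apply_sub_self {R E : Type*} [Semiring R] [AddCommGroup E] [Module R E]
    [TopologicalSpace E] [IsTopologicalAddGroup E] (T : E →L[R] E) {g : E}
    (hg : Summable fun n : ℕ => (T ^ n) g) :
    HasSum (fun n : ℕ => (T ^ n) (g - T g)) g := by
  have hshift : HasSum (fun n : ℕ => (T ^ (n + 1)) g) (∑' n : ℕ, (T ^ n) g - g) := by
    simpa using (hasSum_nat_add_iff' 1).2 hg.hasSum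
  convert hg.hasSum.sub hshift using 1
  · ext n
    rw [map_sub, pow_succ, mul_apply_eq_comp]
  · abel

theorem norm_sub_le_norm_pow_apply_add {E : Type*} [SeminormedAddCommGroup E] [NormedSpace ℝ E]
    (T : E →L[ℝ] E) {x₀ : E} (h₀ : IsFixedPt T x₀) (x : E) (N : ℕ) :
    ‖x - x₀‖ ≤ ‖(T ^ N) (x - x₀)‖ + (∑ k ∈ Finset.range N, ‖T ^ k‖) * ‖T x - x‖ := by
  have htelescope : ∑ k ∈ Finset.range N, (T ^ k) (x - T x) = x - (T ^ N) x := by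
    simp_rw [map_sub, ← mul_apply_eq_comp, ← pow_succ]
    simpa using Finset.sum_range_sub' (fun k => (T ^ k) x) N
  have hsplit : x - x₀ = (T ^ N) (x - x₀) + ∑ k ∈ Finset.range N, (T ^ k) (x - T x) := by
    rw [htelescope, map_sub, pow_apply_eq_iterate T N x₀, h₀.iterate N]
    abel
  calc ‖x - x₀‖ = ‖(T ^ N) (x - x₀) + ∑ k ∈ Finset.range N, (T ^ k) (x - T x)‖ :=
        congrArg _ hsplit
    _ ≤ ‖(T ^ N) (x - x₀)‖ + ∑ k ∈ Finset.range N, ‖(T ^ k) (x - T x)‖ :=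
        (norm_add_le _ _).trans (add_le_add_right (norm_sum_le _ _) _)
    _ ≤ ‖(T ^ N) (x - x₀)‖ + ∑ k ∈ Finset.range N, ‖T ^ k‖ * ‖T x - x‖ := by
        gcongr with k
        exact ((T ^ k).le_opNorm _).trans_eq (by rw [norm_sub_rev])
    _ = _ := by rw [Finset.sum_mul]

theorem tendsto_zero_of_forall_eventually_le_add_mul {ι : Type*} {l : Filter ι} {u v : ι → ℝ}
    {b c : ℕ → ℝ} (hu : ∀ i, 0 ≤ u i) (hb : Tendsto b atTop (𝓝 0)) (hv : Tendsto v l (𝓝 0))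
    (hle : ∀ N, ∀ᶠ i in l, u i ≤ b N + c N * v i) :
    Tendsto u l (𝓝 0) := by
  refine tendsto_order.2 ⟨fun ε hε => Eventually.of_forall fun i => hε.trans_le (hu i),
    fun ε hε => ?_⟩
  obtain ⟨N, hN⟩ := (hb.eventually (gt_mem_nhds (half_pos hε))).exists
  have hcv : ∀ᶠ i in l, c N * v i < ε / 2 := by
    refine (hv.const_mul (c N)).eventually (gt_mem_nhds ?_)
    simpa using half_pos hε
  filter_upwards [hle N, hcv] with i hi hci
  linarith

theorem tendsto_norm_sub_of_isFixedPt {ι E : Type*} [SeminormedAddCommGroup E] [NormedSpace ℝ E]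
    {l : Filter ι} (T : E →L[ℝ] E) {x : ι → E} {x₀ : E} (h₀ : IsFixedPt T x₀)
    (hdefect : Tendsto (fun i => ‖T (x i) - x i‖) l (𝓝 0)) {b : ℕ → ℝ}
    (hb : Tendsto b atTop (𝓝 0)) (hmix : ∀ N, ∀ᶠ i in l, ‖(T ^ N) (x i - x₀)‖ ≤ b N) :
    Tendsto (fun i => ‖x i - x₀‖) l (𝓝 0) := by
  refine tendsto_zero_of_forall_eventually_le_add_mul
    (c := fun N => ∑ k ∈ Finset.range N, ‖T ^ k‖) (fun _ => norm_nonneg _) hb hdefect fun N => ?_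
  filter_upwards [hmix N] with i hi
  exact (norm_sub_le_norm_pow_apply_add T h₀ (x i) N).trans (by gcongr)

theorem norm_inv_smul_sub_apply_le_of_isFixedPt {E : Type*} [SeminormedAddCommGroup E]
    [NormedSpace ℝ E] (Res T₀ T : E →L[ℝ] E) {x₀ x : E} (h₀ : IsFixedPt T₀ x₀)
    (h : IsFixedPt T x) (hRes : Res ((x - x₀) - T₀ (x - x₀)) = x - x₀) {δ K r : ℝ} (hδ : 0 < δ)
    (hT : ‖T₀ (x - x₀) - T (x - x₀)‖ ≤ K * δ * r) (v : E) :
    ‖δ⁻¹ • (x - x₀) - Res v‖ ≤ ‖Res‖ * (‖δ⁻¹ • (T x₀ - T₀ x₀) - v‖ + K * r) := by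
  have hperturb : (x - x₀) - T₀ (x - x₀) = (T x₀ - T₀ x₀) + (T (x - x₀) - T₀ (x - x₀)) := by
    simp only [map_sub, h₀.eq, h.eq]
    abel
  have hresponse : δ⁻¹ • (x - x₀) - Res v =
      Res ((δ⁻¹ • (T x₀ - T₀ x₀) - v) + δ⁻¹ • (T (x - x₀) - T₀ (x - x₀))) := by
    rw [hperturb] at hRes
    conv_lhs => rw [← hRes]
    simp only [map_add, map_sub, map_smul, smul_add, smul_sub]
    abel
  have hdiff : ‖δ⁻¹ • (T (x - x₀) - T₀ (x - x₀))‖ ≤ K * r := by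
    rw [norm_smul, norm_sub_rev, Real.norm_of_nonneg (inv_nonneg.2 hδ.le)]
    calc δ⁻¹ * ‖T₀ (x - x₀) - T (x - x₀)‖ ≤ δ⁻¹ * (K * δ * r) := by gcongr
      _ = K * r := by field_simp
  rw [hresponse]
  exact (Res.le_opNorm _).trans (by gcongr; exact (norm_add_le _ _).trans (by gcongr))

theorem tendsto_norm_fixedPoint_sub_of_perturbation {Bss Bs : Type*}
    [NormedAddCommGroup Bss] [NormedSpace ℝ Bss] [NormedAddCommGroup Bs] [NormedSpace ℝ Bs]
    (iss : Bss →ₗ[ℝ] Bs) (Lss : ℝ → Bss →L[ℝ] Bss) (L₀ : Bs →L[ℝ] Bs) (h : ℝ → Bss)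
    {a : ℕ → ℝ} {K M : ℝ}
    (hcomm : ∀ x, iss (Lss 0 x) = L₀ (iss x))
    (hfix : ∀ᶠ δ in 𝓝[>] 0, Lss δ (h δ) = h δ) (hfix₀ : Lss 0 (h 0) = h 0)
    (hM : ∀ᶠ δ in 𝓝[>] 0, ‖h δ‖ ≤ M) (hM₀ : ‖h 0‖ ≤ M) (ha : Tendsto a atTop (𝓝 0))
    (hconv : ∀ᶠ δ in 𝓝[>] 0, ∀ n, ‖(L₀ ^ n) (iss (h δ - h 0))‖ ≤ a n * ‖h δ - h 0‖)
    (hK : ∀ᶠ δ in 𝓝[>] 0, ‖iss (Lss 0 (h δ)) - iss (Lss δ (h δ))‖ ≤ K * δ * ‖h δ‖) :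
    Tendsto (fun δ => ‖iss (h δ) - iss (h 0)‖) (𝓝[>] 0) (𝓝 0) := by
  have hdefect : Tendsto (fun δ => ‖L₀ (iss (h δ)) - iss (h δ)‖) (𝓝[>] 0) (𝓝 0) := by
    have hlin : Tendsto (fun δ : ℝ => |K| * δ * M) (𝓝[>] 0) (𝓝 0) :=
      tendsto_nhdsWithin_of_tendsto_nhds
        (by simpa using ((tendsto_id (x := 𝓝 (0 : ℝ))).const_mul |K|).mul_const M)
    refine squeeze_zero' (Eventually.of_forall fun _ => norm_nonneg _) ?_ hlin
    filter_upwards [self_mem_nhdsWithin, hfix, hM, hK] with δ hδ hfixδ hMδ hKδ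
    calc ‖L₀ (iss (h δ)) - iss (h δ)‖ = ‖iss (Lss 0 (h δ)) - iss (Lss δ (h δ))‖ := by
          rw [hcomm, hfixδ]
      _ ≤ K * δ * ‖h δ‖ := hKδ
      _ ≤ |K| * δ * M := by
          have : (0 : ℝ) < δ := hδ
          gcongr
          exact le_abs_self K
  have hmix : ∀ N, ∀ᶠ δ in 𝓝[>] 0, ‖(L₀ ^ N) (iss (h δ) - iss (h 0))‖ ≤ |a N| * (2 * M) :=
    fun N => by
      filter_upwards [hconv, hM] with δ hconvδ hMδ
      rw [← map_sub]
      refine (hconvδ N).trans ?_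
      gcongr
      · exact le_abs_self _
      · linarith [norm_sub_le (h δ) (h 0)]
  exact tendsto_norm_sub_of_isFixedPt L₀ (by rw [IsFixedPt, ← hcomm, hfix₀]) hdefect
    (by simpa using ha.abs.mul_const (2 * M)) hmix

/-- `B_ss ⊆ B_s ⊆ B_w` are modelled by the linear inclusions `iss` and `is`, and `μ ↦ μ(X)` by
`mass`. -/
theorem linear_response_general
    {Bss Bs Bw : Type*}
    [NormedAddCommGroup Bss] [NormedSpace ℝ Bss]
    [NormedAddCommGroup Bs] [NormedSpace ℝ Bs]
    [NormedAddCommGroup Bw] [NormedSpace ℝ Bw]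
    (iss : Bss →ₗ[ℝ] Bs) (is : Bs →ₗ[ℝ] Bw)
    (mass : Bw →L[ℝ] ℝ)
    (δbar : ℝ) (hδbar : 0 < δbar)
    -- the family of operators, acting (compatibly) on the three spaces
    (Lss : ℝ → Bss →L[ℝ] Bss) (Ls : ℝ → Bs →L[ℝ] Bs) (Lw : ℝ → Bw →L[ℝ] Bw)
    (hcomm_ss : ∀ δ, δ ∈ Ico 0 δbar → ∀ x : Bss, iss (Lss δ x) = Ls δ (iss x))
    (hcomm_s : ∀ δ, δ ∈ Ico 0 δbar → ∀ x : Bs, is (Ls δ x) = Lw δ (is x))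
    -- Markov: preservation of mass and of positivity
    (hmass : ∀ δ, δ ∈ Ico 0 δbar → ∀ x : Bw, mass (Lw δ x) = mass x)
    -- (LR1) regularity bounds: fixed probability measures, uniformly bounded in B_ss
    (h : ℝ → Bss) (M : ℝ)
    (hfix : ∀ δ, δ ∈ Ico 0 δbar → Lss δ (h δ) = h δ)
    (hprob_mass : ∀ δ, δ ∈ Ico 0 δbar → mass (is (iss (h δ))) = 1)
    (hM : ∀ δ, δ ∈ Ico 0 δbar → ‖h δ‖ ≤ M)
    -- (LR2) convergence to equilibrium for the unperturbed operator
    (a : ℕ → ℝ) (ha : Tendsto a atTop (𝓝 0))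
    (hconv : ∀ g : Bss, mass (is (iss g)) = 0 → ∀ n : ℕ, ‖(Ls 0 ^ n) (iss g)‖ ≤ a n * ‖g‖)
    -- (LR3) the resolvent `(Id - L₀)⁻¹ = ∑ L₀ⁱ` is a bounded operator on V_w
    (Res : Bw →L[ℝ] Bw)
    (hRes : ∀ g : Bw, mass g = 0 → HasSum (fun n : ℕ => (Lw 0 ^ n) g) (Res g))
    -- (LR4) small perturbation and derivative operator
    (K : ℝ)
    (hK1 : ∀ δ, δ ∈ Ico 0 δbar → ∀ f : Bs, ‖is (Ls 0 f) - is (Ls δ f)‖ ≤ K * δ * ‖f‖)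
    (hK2 : ∀ δ, δ ∈ Ico 0 δbar → ∀ f : Bss, ‖iss (Lss 0 f) - iss (Lss δ f)‖ ≤ K * δ * ‖f‖)
    (Ldot : Bw)
    (hLdot : Tendsto
      (fun δ : ℝ => ‖δ⁻¹ • (Lw δ (is (iss (h 0))) - Lw 0 (is (iss (h 0)))) - Ldot‖)
      (𝓝[>] 0) (𝓝 0)) :
    -- linear response formula, with convergence in the weak norm
    Tendsto (fun δ : ℝ => ‖δ⁻¹ • (is (iss (h δ)) - is (iss (h 0))) - Res Ldot‖)
      (𝓝[>] 0) (𝓝 0) := by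
  have h0 : (0 : ℝ) ∈ Ico 0 δbar := ⟨le_rfl, hδbar⟩
  have hsmall : ∀ᶠ δ in 𝓝[>] (0 : ℝ), δ ∈ Ioo 0 δbar := Ioo_mem_nhdsGT hδbar
  have hIco : ∀ᶠ δ in 𝓝[>] (0 : ℝ), δ ∈ Ico 0 δbar := hsmall.mono fun _ => And.imp_left le_of_lt
  have hfix_w : ∀ δ ∈ Ico 0 δbar, IsFixedPt (Lw δ) (is (iss (h δ))) := fun δ hδ => by
    rw [IsFixedPt, ← hcomm_s δ hδ, ← hcomm_ss δ hδ, hfix δ hδ]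
  have hstrong := tendsto_norm_fixedPoint_sub_of_perturbation iss Lss (Ls 0) h (hcomm_ss 0 h0)
    (hIco.mono hfix) (hfix 0 h0) (hIco.mono hM) (hM 0 h0) ha
    (hIco.mono fun δ hδ => hconv _ (by simp [hprob_mass δ hδ, hprob_mass 0 h0]))
    (hIco.mono fun δ hδ => hK2 δ hδ (h δ))
  have hweak : ∀ᶠ δ in 𝓝[>] (0 : ℝ), ‖δ⁻¹ • (is (iss (h δ)) - is (iss (h 0))) - Res Ldot‖ ≤
      ‖Res‖ * (‖δ⁻¹ • (Lw δ (is (iss (h 0))) - Lw 0 (is (iss (h 0)))) - Ldot‖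
        + K * ‖iss (h δ) - iss (h 0)‖) := by
    filter_upwards [hsmall, hIco] with δ hδ hδ'
    have hg : mass (is (iss (h δ)) - is (iss (h 0))) = 0 := by
      rw [map_sub, hprob_mass δ hδ', hprob_mass 0 h0, sub_self]
    refine norm_inv_smul_sub_apply_le_of_isFixedPt Res (Lw 0) (Lw δ) (hfix_w 0 h0)
      (hfix_w δ hδ') ?_ hδ.1 ?_ Ldot
    · exact (hRes _ (by rw [map_sub, hmass 0 h0, hg, sub_zero])).unique
        (hasSum_pow_apply_sub_self _ (hRes _ hg).summable)
    · rw [← map_sub is, ← hcomm_s δ hδ', ← hcomm_s 0 h0]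
      exact hK1 δ hδ' _
  exact squeeze_zero' (Eventually.of_forall fun _ => norm_nonneg _) hweak
    (by simpa using (hLdot.add (hstrong.const_mul K)).const_mul ‖Res‖)

/-- **Abstract linear response theorem** (Theorem 2.1 / `thm:linresp`).
The nested spaces `B_ss ⊆ B_s ⊆ B_w` of signed measures are modeled by normed
spaces `Bss`, `Bs`, `Bw` together with injective norm-nonincreasing linear
inclusions `iss : Bss → Bs`, `is : Bs → Bw`; the continuous mass functional
`μ ↦ μ(X)` is `mass : Bw →L[ℝ] ℝ` (hence defined on all three spaces by
restriction); a Markov operator preserves the mass and positivity. -/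
theorem linear_response
    {Bss Bs Bw : Type*}
    [NormedAddCommGroup Bss] [NormedSpace ℝ Bss]
    [NormedAddCommGroup Bs] [NormedSpace ℝ Bs]
    [NormedAddCommGroup Bw] [NormedSpace ℝ Bw]
    [PartialOrder Bw]
    (iss : Bss →ₗ[ℝ] Bs) (is : Bs →ₗ[ℝ] Bw)
    (hiss_inj : Function.Injective iss) (his_inj : Function.Injective is)
    (hiss_norm : ∀ x : Bss, ‖iss x‖ ≤ ‖x‖) (his_norm : ∀ x : Bs, ‖is x‖ ≤ ‖x‖)
    (mass : Bw →L[ℝ] ℝ)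
    (δbar : ℝ) (hδbar : 0 < δbar)
    -- the family of operators, acting (compatibly) on the three spaces
    (Lss : ℝ → Bss →L[ℝ] Bss) (Ls : ℝ → Bs →L[ℝ] Bs) (Lw : ℝ → Bw →L[ℝ] Bw)
    (hcomm_ss : ∀ δ, δ ∈ Ico 0 δbar → ∀ x : Bss, iss (Lss δ x) = Ls δ (iss x))
    (hcomm_s : ∀ δ, δ ∈ Ico 0 δbar → ∀ x : Bs, is (Ls δ x) = Lw δ (is x))
    -- Markov: preservation of mass and of positivity
    (hmass : ∀ δ, δ ∈ Ico 0 δbar → ∀ x : Bw, mass (Lw δ x) = mass x)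
    (hpos : ∀ δ, δ ∈ Ico 0 δbar → ∀ x : Bw, 0 ≤ x → 0 ≤ Lw δ x)
    -- (LR1) regularity bounds: fixed probability measures, uniformly bounded in B_ss
    (h : ℝ → Bss) (M : ℝ)
    (hfix : ∀ δ, δ ∈ Ico 0 δbar → Lss δ (h δ) = h δ)
    (hprob_mass : ∀ δ, δ ∈ Ico 0 δbar → mass (is (iss (h δ))) = 1)
    (hprob_pos : ∀ δ, δ ∈ Ico 0 δbar → 0 ≤ is (iss (h δ)))
    (hM : ∀ δ, δ ∈ Ico 0 δbar → ‖h δ‖ ≤ M)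
    -- (LR2) convergence to equilibrium for the unperturbed operator
    (a : ℕ → ℝ) (ha : Tendsto a atTop (𝓝 0))
    (hconv : ∀ g : Bss, mass (is (iss g)) = 0 → ∀ n : ℕ, ‖(Ls 0 ^ n) (iss g)‖ ≤ a n * ‖g‖)
    -- (LR3) the resolvent `(Id - L₀)⁻¹ = ∑ L₀ⁱ` is a bounded operator on V_w
    (Res : Bw →L[ℝ] Bw)
    (hRes : ∀ g : Bw, mass g = 0 → HasSum (fun n : ℕ => (Lw 0 ^ n) g) (Res g))
    -- (LR4) small perturbation and derivative operator
    (K : ℝ)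
    (hK1 : ∀ δ, δ ∈ Ico 0 δbar → ∀ f : Bs, ‖is (Ls 0 f) - is (Ls δ f)‖ ≤ K * δ * ‖f‖)
    (hK2 : ∀ δ, δ ∈ Ico 0 δbar → ∀ f : Bss, ‖iss (Lss 0 f) - iss (Lss δ f)‖ ≤ K * δ * ‖f‖)
    (Ldot : Bw) (hLdotV : mass Ldot = 0)
    (hLdot : Tendsto
      (fun δ : ℝ => ‖δ⁻¹ • (Lw δ (is (iss (h 0))) - Lw 0 (is (iss (h 0)))) - Ldot‖)
      (𝓝[>] 0) (𝓝 0)) :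
    -- linear response formula, with convergence in the weak norm
    Tendsto (fun δ : ℝ => ‖δ⁻¹ • (is (iss (h δ)) - is (iss (h 0))) - Res Ldot‖)
      (𝓝[>] 0) (𝓝 0) :=
  linear_response_general iss is mass δbar hδbar Lss Ls Lw hcomm_ss hcomm_s hmass h M hfix
    hprob_mass hM a ha hconv Res hRes K hK1 hK2 Ldot hLdot
end

section
/- Let B_ww ⊇ B_w be a further space with ‖·‖_ww ≤ ‖·‖_w and V_ww its subspace of zero-mass elements. Suppose the family (L_δ) satisfies the hypotheses of the linear response theorem, and additionally: (QR1) the derivative operator L̇ extends to a bounded operator B_w → V_ww with ‖(L_δ − L_0)/δ − L̇‖_{B_w→B_ww} → 0; (QR2) there exists L̈h_0 ∈ V_ww with ‖((L_δ − L_0)h_0 − δ L̇h_0)/δ² − L̈h_0‖_ww → 0; (QR3) (Id − L_0)^{-1} extends to a bounded operator V_ww → V_ww. Then ‖(h_δ − h_0 − δ(Id−L_0)^{-1}L̇h_0)/δ² − (Id−L_0)^{-1}[L̈h_0 + L̇(Id−L_0)^{-1}L̇h_0]‖_ww → 0 as δ → 0. -/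
open Filter Topology Set Function

/-!
Write `u δ` for `h δ` seen in `B_w` and `R = (Id - L₀)⁻¹`. Since `u δ` and `u 0` are fixed points,
`(Id - L₀) (u δ - u 0) = (L_δ - L₀) (u δ)`, and since `L₀ⁿ (u δ - u 0) → 0` the Neumann series
inverts this: `u δ - u 0 = R ((L_δ - L₀) (u δ))`. The bound `‖L_δ - L₀‖ ≤ K δ` from `B_s` to `B_w`
and the continuity of `δ ↦ h δ` in `B_s` (a consequence of the uniform decay of `L₀ⁿ` on zero-mass
measures) then give linear response, `δ⁻¹ (u δ - u 0) → R (L̇ h₀)`. For the second order,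
`g δ = δ⁻² (u δ - u 0 - δ R (L̇ h₀))` satisfies
`(Id - L₀) (g δ) = δ⁻¹ (L_δ - L₀) (δ⁻¹ (u δ - u 0)) + δ⁻² ((L_δ - L₀) h₀ - δ L̇ h₀)`,
which tends to `L̇ R (L̇ h₀) + L̈ h₀` in `B_ww` by (QR1), linear response and (QR2); the resolvent
on `V_ww` from (QR3) inverts `Id - L₀` once more.
-/

theorem tendsto_zero_apply_of_forall_norm_le {α E F : Type*} [SeminormedAddGroup E]
    [SeminormedAddGroup F] {l : Filter α} {A : α → E → F} {f : α → E}
    (hA : ∀ ε > 0, ∀ᶠ x in l, ∀ y, ‖A x y‖ ≤ ε * ‖y‖)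
    (hf : IsBoundedUnder (· ≤ ·) l fun x => ‖f x‖) : Tendsto (fun x => A x (f x)) l (𝓝 0) := by
  obtain ⟨C, hC⟩ := hf
  rw [NormedAddGroup.tendsto_nhds_zero]
  intro ε hε
  have hC₁ : 0 < |C| + 1 := by positivity
  filter_upwards [hA (ε / (|C| + 1)) (by positivity), eventually_map.mp hC] with x hAx hCx
  calc ‖A x (f x)‖ ≤ ε / (|C| + 1) * ‖f x‖ := hAx _
    _ ≤ ε / (|C| + 1) * |C| := by gcongr; exact hCx.trans (le_abs_self C)
    _ < ε := by
      rw [div_mul_eq_mul_div, div_lt_iff₀ hC₁]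
      linarith

namespace ContinuousLinearMap

section NeumannSeries

variable {R M M' : Type*} [Ring R] [AddCommGroup M] [TopologicalSpace M] [Module R M]
  [AddCommGroup M'] [TopologicalSpace M'] [Module R M']

theorem pow_apply_of_semiconj {i : M → M'} {S : M →L[R] M} {T : M' →L[R] M'}
    (h : ∀ x, i (S x) = T (i x)) (n : ℕ) (x : M) : i ((S ^ n) x) = (T ^ n) (i x) := by
  induction n generalizing x with
  | zero => rfl
  | succ n ih => rw [pow_succ, mul_apply_eq_comp, ih, h, pow_succ, mul_apply_eq_comp]

variable [IsTopologicalAddGroup M]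

theorem eq_pow_apply_add_geom_sum_apply (S : M →L[R] M) (x : M) (N : ℕ) :
    x = (S ^ N) x + (∑ n ∈ Finset.range N, S ^ n) (x - S x) := by
  have h := congrArg (fun A : M →L[R] M => A x) (geom_sum_mul_neg S N)
  simp only [mul_apply_eq_comp, sub_apply, one_apply_eq_self] at h
  rw [h]
  abel

variable [T2Space M] (T : M →L[R] M)

theorem eq_of_hasSum_pow_apply_sub {y s : M} (hs : HasSum (fun n => (T ^ n) (y - T y)) s)
    (hy : Tendsto (fun n => (T ^ n) y) atTop (𝓝 0)) : s = y := by
  have htel : ∀ N, ∑ n ∈ Finset.range N, (T ^ n) (y - T y) = y - (T ^ N) y := fun N => by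
    simp_rw [map_sub, ← mul_apply_eq_comp, ← pow_succ]
    simpa using Finset.sum_range_sub' (fun n => (T ^ n) y) N
  refine tendsto_nhds_unique hs.tendsto_sum_nat ?_
  simp_rw [htel]
  simpa using tendsto_const_nhds.sub hy

theorem apply_eq_sub_of_hasSum_pow_apply {x s : M} (hs : HasSum (fun n => (T ^ n) x) s) :
    T s = s - x := by
  have hshift : HasSum (fun n => (T ^ (n + 1)) x) (T s) := by
    simpa only [pow_succ', mul_apply_eq_comp] using T.hasSum hs
  simpa using hshift.unique ((hasSum_nat_add_iff' 1).mpr hs)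

theorem tendsto_pow_apply_of_hasSum_pow_apply {x s : M} (hs : HasSum (fun n => (T ^ n) x) s) :
    Tendsto (fun N => (T ^ N) s) atTop (𝓝 0) := by
  have htail : ∀ N, (T ^ N) s = s - ∑ n ∈ Finset.range N, (T ^ n) x := fun N => by
    have hshift : HasSum (fun n => (T ^ (n + N)) x) ((T ^ N) s) := by
      convert (T ^ N).hasSum hs using 2 with n
      rw [pow_add, pow_mul_comm, mul_apply_eq_comp]
    exact hshift.unique ((hasSum_nat_add_iff' N).mpr hs)
  simp_rw [htail]
  simpa only [sub_self] using (tendsto_const_nhds (x := s)).sub hs.tendsto_sum_nat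

end NeumannSeries

end ContinuousLinearMap

section Response

variable {E F : Type*} [NormedAddCommGroup E] [NormedSpace ℝ E]
  [NormedAddCommGroup F] [NormedSpace ℝ F]

theorem tendsto_pow_apply_of_semiconj {i : E → F} {S : E →L[ℝ] E} {T : F →L[ℝ] F}
    (hi : ∀ x, ‖i x‖ ≤ ‖x‖) (h : ∀ x, i (S x) = T (i x)) {x : E}
    (hx : Tendsto (fun n => (S ^ n) x) atTop (𝓝 0)) :
    Tendsto (fun n => (T ^ n) (i x)) atTop (𝓝 0) := by
  refine squeeze_zero_norm (fun n => ?_) (tendsto_zero_iff_norm_tendsto_zero.mp hx)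
  rw [← ContinuousLinearMap.pow_apply_of_semiconj h]
  exact hi _

theorem tendsto_of_isFixedPt {α : Type*} {l : Filter α} {S₀ : E →L[ℝ] E} {S : α → E →L[ℝ] E}
    {v₀ : E} {v : α → E} {b : ℕ → ℝ} (hb : Tendsto b atTop (𝓝 0)) (hv₀ : IsFixedPt S₀ v₀)
    (hv : ∀ᶠ x in l, IsFixedPt (S x) (v x))
    (hpow : ∀ᶠ x in l, ∀ N, ‖(S₀ ^ N) (v x - v₀)‖ ≤ b N)
    (hS : Tendsto (fun x => S x (v x) - S₀ (v x)) l (𝓝 0)) : Tendsto v l (𝓝 v₀) := by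
  rw [← tendsto_sub_nhds_zero_iff, NormedAddGroup.tendsto_nhds_zero]
  intro ε hε
  obtain ⟨N, hN⟩ := (hb.eventually (gt_mem_nhds (half_pos hε))).exists
  set G := ∑ n ∈ Finset.range N, S₀ ^ n
  have hG : Tendsto (fun x => G (S x (v x) - S₀ (v x))) l (𝓝 0) := by
    simpa only [map_zero, Function.comp_def] using (G.continuous.tendsto 0).comp hS
  filter_upwards [hv, hpow, NormedAddGroup.tendsto_nhds_zero.mp hG _ (half_pos hε)]
    with x hvx hpowx hGx
  have hdefect : (v x - v₀) - S₀ (v x - v₀) = S x (v x) - S₀ (v x) := by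
    rw [map_sub, hv₀.eq, hvx.eq]
    abel
  calc ‖v x - v₀‖ = ‖(S₀ ^ N) (v x - v₀) + G (S x (v x) - S₀ (v x))‖ := by
        rw [← hdefect, ← S₀.eq_pow_apply_add_geom_sum_apply]
    _ ≤ ‖(S₀ ^ N) (v x - v₀)‖ + ‖G (S x (v x) - S₀ (v x))‖ := norm_add_le _ _
    _ < ε / 2 + ε / 2 := add_lt_add_of_le_of_lt ((hpowx N).trans hN.le) hGx
    _ = ε := add_halves ε

theorem tendsto_inv_smul_sub_of_isFixedPt {l : Filter ℝ} {T₀ R : E →L[ℝ] E}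
    {T : ℝ → E →L[ℝ] E} {u₀ v₁ : E} {u : ℝ → E}
    (hR : ∀ y, HasSum (fun n => (T₀ ^ n) (y - T₀ y)) (R (y - T₀ y)))
    (hu₀ : IsFixedPt T₀ u₀) (hu : ∀ᶠ δ in l, IsFixedPt (T δ) (u δ))
    (hpow : ∀ᶠ δ in l, Tendsto (fun n => (T₀ ^ n) (u δ - u₀)) atTop (𝓝 0))
    (hsmall : Tendsto (fun δ => δ⁻¹ • (T δ (u δ - u₀) - T₀ (u δ - u₀))) l (𝓝 0))
    (hv₁ : Tendsto (fun δ => δ⁻¹ • (T δ u₀ - T₀ u₀)) l (𝓝 v₁)) :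
    Tendsto (fun δ => δ⁻¹ • (u δ - u₀)) l (𝓝 (R v₁)) := by
  have hlim : Tendsto (fun δ => R (δ⁻¹ • (T δ (u δ - u₀) - T₀ (u δ - u₀))
      + δ⁻¹ • (T δ u₀ - T₀ u₀))) l (𝓝 (R v₁)) := by
    simpa only [zero_add, Function.comp_def] using (R.continuous.tendsto _).comp (hsmall.add hv₁)
  refine hlim.congr' ?_
  filter_upwards [hu, hpow] with δ huδ hpowδ
  have hdefect : T δ (u δ - u₀) - T₀ (u δ - u₀) + (T δ u₀ - T₀ u₀)
      = (u δ - u₀) - T₀ (u δ - u₀) := by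
    simp only [map_sub, huδ.eq, hu₀.eq]
    abel
  rw [← smul_add, map_smul, hdefect, T₀.eq_of_hasSum_pow_apply_sub (hR _) hpowδ]

theorem map_sq_inv_smul_sub_apply (i : E →ₗ[ℝ] F) {T₀ T : E →L[ℝ] E} {u₀ u : E}
    (hu₀ : IsFixedPt T₀ u₀) (hu : IsFixedPt T u) (δ : ℝ) (v : E) :
    i ((δ ^ 2)⁻¹ • (u - u₀ - δ • v) - T₀ ((δ ^ 2)⁻¹ • (u - u₀ - δ • v))) =
      δ⁻¹ • (i (T (δ⁻¹ • (u - u₀))) - i (T₀ (δ⁻¹ • (u - u₀))))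
        + (δ ^ 2)⁻¹ • (i (T u₀ - T₀ u₀) - δ • i (v - T₀ v)) := by
  simp only [map_smul, map_sub, hu.eq, hu₀.eq]
  module

theorem tendsto_sq_inv_smul_sub_of_isFixedPt {l : Filter ℝ} {T₀ R : E →L[ℝ] E}
    {T : ℝ → E →L[ℝ] E} {u₀ v₁ : E} {u : ℝ → E} {i : E →ₗ[ℝ] F} {S₀ Rw : F →L[ℝ] F}
    {D : E →L[ℝ] F} {v₂ : F}
    (hi : ∀ x, ‖i x‖ ≤ ‖x‖) (hS₀ : ∀ x, i (T₀ x) = S₀ (i x))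
    (hRw : ∀ x, HasSum (fun n => (S₀ ^ n) (i (x - T₀ x))) (Rw (i (x - T₀ x))))
    (hRv₁ : HasSum (fun n => (T₀ ^ n) v₁) (R v₁))
    (hu₀ : IsFixedPt T₀ u₀) (hu : ∀ᶠ δ in l, IsFixedPt (T δ) (u δ))
    (hpow : ∀ᶠ δ in l, Tendsto (fun n => (T₀ ^ n) (u δ - u₀)) atTop (𝓝 0))
    (hlin : Tendsto (fun δ => δ⁻¹ • (u δ - u₀)) l (𝓝 (R v₁)))
    (hD : ∀ ε > 0, ∀ᶠ δ in l, ∀ f, ‖δ⁻¹ • (i (T δ f) - i (T₀ f)) - D f‖ ≤ ε * ‖f‖)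
    (hv₂ : Tendsto (fun δ => (δ ^ 2)⁻¹ • (i (T δ u₀ - T₀ u₀) - δ • i v₁)) l (𝓝 v₂)) :
    Tendsto (fun δ => (δ ^ 2)⁻¹ • (i (u δ - u₀) - δ • i (R v₁))) l
      (𝓝 (Rw (v₂ + D (R v₁)))) := by
  set g : ℝ → E := fun δ => (δ ^ 2)⁻¹ • (u δ - u₀ - δ • R v₁)
  have hRv₁_sub : R v₁ - T₀ (R v₁) = v₁ := by
    rw [T₀.apply_eq_sub_of_hasSum_pow_apply hRv₁, sub_sub_cancel]
  have hgpow : ∀ᶠ δ in l, Tendsto (fun n => (T₀ ^ n) (g δ)) atTop (𝓝 0) := by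
    filter_upwards [hpow] with δ hδ
    simpa only [g, map_smul, map_sub, smul_zero, sub_zero] using
      (hδ.sub ((T₀.tendsto_pow_apply_of_hasSum_pow_apply hRv₁).const_smul δ)).const_smul (δ ^ 2)⁻¹
  have hres : ∀ᶠ δ in l, i (g δ) = Rw (i (g δ - T₀ (g δ))) := by
    filter_upwards [hgpow] with δ hδ
    have hy : i (g δ - T₀ (g δ)) = i (g δ) - S₀ (i (g δ)) := by rw [map_sub, hS₀]
    rw [hy]
    exact (S₀.eq_of_hasSum_pow_apply_sub (hy ▸ hRw (g δ))
      (tendsto_pow_apply_of_semiconj hi hS₀ hδ)).symm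
  have hlim : Tendsto (fun δ => (δ⁻¹ • (i (T δ (δ⁻¹ • (u δ - u₀))) - i (T₀ (δ⁻¹ • (u δ - u₀))))
        - D (δ⁻¹ • (u δ - u₀))) + D (δ⁻¹ • (u δ - u₀))
        + (δ ^ 2)⁻¹ • (i (T δ u₀ - T₀ u₀) - δ • i v₁)) l (𝓝 (0 + D (R v₁) + v₂)) :=
    ((tendsto_zero_apply_of_forall_norm_le hD hlin.norm.isBoundedUnder_le).add
      ((D.continuous.tendsto _).comp hlin)).add hv₂
  rw [zero_add, add_comm] at hlim
  refine ((Rw.continuous.tendsto _).comp hlim).congr' ?_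
  filter_upwards [hu, hres] with δ huδ hresδ
  have hsplit : i (g δ - T₀ (g δ)) = δ⁻¹ • (i (T δ (δ⁻¹ • (u δ - u₀)))
      - i (T₀ (δ⁻¹ • (u δ - u₀)))) - D (δ⁻¹ • (u δ - u₀)) + D (δ⁻¹ • (u δ - u₀))
      + (δ ^ 2)⁻¹ • (i (T δ u₀ - T₀ u₀) - δ • i v₁) := by
    rw [map_sq_inv_smul_sub_apply i hu₀ huδ, hRv₁_sub, sub_add_cancel]
  rw [Function.comp_apply, ← hsplit, ← hresδ]
  simp only [g, map_smul, map_sub]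

end Response

section Perturbation

variable {G E : Type*} [NormedAddCommGroup G] [NormedSpace ℝ G] [NormedAddCommGroup E]
  [NormedSpace ℝ E] {δbar K : ℝ} {S : ℝ → G →L[ℝ] G} {T : ℝ → E →L[ℝ] E} {i : G →ₗ[ℝ] E}

theorem norm_apply_sub_apply_le (hcomm : ∀ δ ∈ Ico 0 δbar, ∀ x, i (S δ x) = T δ (i x))
    (hK : ∀ δ ∈ Ico 0 δbar, ∀ f, ‖i (S 0 f) - i (S δ f)‖ ≤ K * δ * ‖f‖)
    {δ : ℝ} (hδ : δ ∈ Ico 0 δbar) (f : G) : ‖T δ (i f) - T 0 (i f)‖ ≤ |K| * δ * ‖f‖ := by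
  have := hδ.1
  rw [← hcomm δ hδ, ← hcomm 0 ⟨le_rfl, hδ.1.trans_lt hδ.2⟩, norm_sub_rev]
  exact (hK δ hδ f).trans (by gcongr; exact le_abs_self K)

theorem tendsto_inv_smul_apply_sub_apply (hδbar : 0 < δbar)
    (hcomm : ∀ δ ∈ Ico 0 δbar, ∀ x, i (S δ x) = T δ (i x))
    (hK : ∀ δ ∈ Ico 0 δbar, ∀ f, ‖i (S 0 f) - i (S δ f)‖ ≤ K * δ * ‖f‖)
    {w : ℝ → G} (hw : Tendsto w (𝓝[>] 0) (𝓝 0)) :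
    Tendsto (fun δ => δ⁻¹ • (T δ (i (w δ)) - T 0 (i (w δ)))) (𝓝[>] 0) (𝓝 0) := by
  refine squeeze_zero_norm' (a := fun δ => |K| * ‖w δ‖) ?_ ?_
  · filter_upwards [Ioo_mem_nhdsGT hδbar] with δ hδ
    rw [norm_smul, norm_inv, Real.norm_of_nonneg hδ.1.le]
    calc δ⁻¹ * ‖T δ (i (w δ)) - T 0 (i (w δ))‖ ≤ δ⁻¹ * (|K| * δ * ‖w δ‖) :=
          mul_le_mul_of_nonneg_left (norm_apply_sub_apply_le hcomm hK (Ioo_subset_Ico_self hδ) _)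
            (inv_nonneg.2 hδ.1.le)
      _ = |K| * ‖w δ‖ := by field_simp [hδ.1.ne']
  · simpa using (tendsto_zero_iff_norm_tendsto_zero.mp hw).const_mul |K|

theorem tendsto_map_of_isFixedPt (hδbar : 0 < δbar)
    (hcomm : ∀ δ ∈ Ico 0 δbar, ∀ x, i (S δ x) = T δ (i x))
    (hK : ∀ δ ∈ Ico 0 δbar, ∀ f, ‖i (S 0 f) - i (S δ f)‖ ≤ K * δ * ‖f‖)
    {h : ℝ → G} {M : ℝ} (hfix : ∀ δ ∈ Ico 0 δbar, IsFixedPt (S δ) (h δ))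
    (hM : ∀ δ ∈ Ico 0 δbar, ‖h δ‖ ≤ M) {a : ℕ → ℝ} (ha : Tendsto a atTop (𝓝 0))
    (hconv : ∀ δ ∈ Ico 0 δbar, ∀ N, ‖(T 0 ^ N) (i (h δ - h 0))‖ ≤ a N * ‖h δ - h 0‖) :
    Tendsto (fun δ => i (h δ)) (𝓝[>] 0) (𝓝 (i (h 0))) := by
  have h0 : (0 : ℝ) ∈ Ico 0 δbar := ⟨le_rfl, hδbar⟩
  have hmem : ∀ᶠ δ in 𝓝[>] (0 : ℝ), δ ∈ Ico 0 δbar :=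
    mem_of_superset (Ioo_mem_nhdsGT hδbar) Ioo_subset_Ico_self
  have hfix' : ∀ δ ∈ Ico 0 δbar, IsFixedPt (T δ) (i (h δ)) := fun δ hδ => by
    rw [IsFixedPt, ← hcomm δ hδ, (hfix δ hδ).eq]
  refine tendsto_of_isFixedPt (b := fun N => |a N| * (M + M))
    (by simpa using ha.abs.mul_const (M + M)) (hfix' 0 h0) (hmem.mono hfix') ?_ ?_
  · filter_upwards [hmem] with δ hδ N
    rw [← map_sub]
    exact (hconv δ hδ N).trans (mul_le_mul (le_abs_self _)
      (norm_sub_le_of_le (hM δ hδ) (hM 0 h0)) (norm_nonneg _) (abs_nonneg _))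
  · refine squeeze_zero_norm' (a := fun δ => |K| * M * δ) ?_ ?_
    · filter_upwards [hmem] with δ hδ
      calc _ ≤ |K| * δ * ‖h δ‖ := norm_apply_sub_apply_le hcomm hK hδ _
        _ ≤ |K| * δ * M := mul_le_mul_of_nonneg_left (hM δ hδ) (by have := hδ.1; positivity)
        _ = |K| * M * δ := by ring
    · simpa using (tendsto_nhdsWithin_of_tendsto_nhds (tendsto_id (x := 𝓝 (0 : ℝ)))).const_mul
        (|K| * M)

end Perturbation

theorem quadratic_response_general
    {Bss Bs Bw : Type*}
    [NormedAddCommGroup Bss] [NormedSpace ℝ Bss]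
    [NormedAddCommGroup Bs] [NormedSpace ℝ Bs]
    [NormedAddCommGroup Bw] [NormedSpace ℝ Bw]
    (iss : Bss →ₗ[ℝ] Bs) (is : Bs →ₗ[ℝ] Bw)
    (his_norm : ∀ x : Bs, ‖is x‖ ≤ ‖x‖)
    (mass : Bw →L[ℝ] ℝ)
    (δbar : ℝ) (hδbar : 0 < δbar)
    -- the family of operators, acting (compatibly) on the three spaces
    (Lss : ℝ → Bss →L[ℝ] Bss) (Ls : ℝ → Bs →L[ℝ] Bs) (Lw : ℝ → Bw →L[ℝ] Bw)
    (hcomm_ss : ∀ δ, δ ∈ Ico 0 δbar → ∀ x : Bss, iss (Lss δ x) = Ls δ (iss x))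
    (hcomm_s : ∀ δ, δ ∈ Ico 0 δbar → ∀ x : Bs, is (Ls δ x) = Lw δ (is x))
    -- Markov: preservation of mass and of positivity
    (hmass : ∀ δ, δ ∈ Ico 0 δbar → ∀ x : Bw, mass (Lw δ x) = mass x)
    -- (LR1) regularity bounds: fixed probability measures, uniformly bounded in B_ss
    (h : ℝ → Bss) (M : ℝ)
    (hfix : ∀ δ, δ ∈ Ico 0 δbar → Lss δ (h δ) = h δ)
    (hprob_mass : ∀ δ, δ ∈ Ico 0 δbar → mass (is (iss (h δ))) = 1)
    (hM : ∀ δ, δ ∈ Ico 0 δbar → ‖h δ‖ ≤ M)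
    -- (LR2) convergence to equilibrium for the unperturbed operator
    (a : ℕ → ℝ) (ha : Tendsto a atTop (𝓝 0))
    (hconv : ∀ g : Bss, mass (is (iss g)) = 0 → ∀ n : ℕ, ‖(Ls 0 ^ n) (iss g)‖ ≤ a n * ‖g‖)
    -- (LR3) the resolvent `(Id - L₀)⁻¹ = ∑ L₀ⁱ` is a bounded operator on V_w
    (Res : Bw →L[ℝ] Bw)
    (hRes : ∀ g : Bw, mass g = 0 → HasSum (fun n : ℕ => (Lw 0 ^ n) g) (Res g))
    -- (LR4) small perturbation and derivative operator
    (K : ℝ)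
    (hK1 : ∀ δ, δ ∈ Ico 0 δbar → ∀ f : Bs, ‖is (Ls 0 f) - is (Ls δ f)‖ ≤ K * δ * ‖f‖)
    (hK2 : ∀ δ, δ ∈ Ico 0 δbar → ∀ f : Bss, ‖iss (Lss 0 f) - iss (Lss δ f)‖ ≤ K * δ * ‖f‖)
    (Ldot : Bw) (hLdotV : mass Ldot = 0)
    (hLdot : Tendsto
      (fun δ : ℝ => ‖δ⁻¹ • (Lw δ (is (iss (h 0))) - Lw 0 (is (iss (h 0)))) - Ldot‖)
      (𝓝[>] 0) (𝓝 0))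
    -- the further, weaker space `B_ww ⊇ B_w`
    {Bww : Type*} [NormedAddCommGroup Bww] [NormedSpace ℝ Bww]
    (iw : Bw →ₗ[ℝ] Bww)
    (hiw_norm : ∀ x : Bw, ‖iw x‖ ≤ ‖x‖)
    (massww : Bww →L[ℝ] ℝ) (hmass_compat : ∀ x : Bw, massww (iw x) = mass x)
    (Lww : ℝ → Bww →L[ℝ] Bww)
    (hcomm_w : ∀ δ, δ ∈ Ico 0 δbar → ∀ x : Bw, iw (Lw δ x) = Lww δ (iw x))
    -- (QR1) the derivative operator extends to a bounded operator `B_w → V_ww`,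
    -- with uniform convergence of the divided differences in operator norm
    (Ldotop : Bw →L[ℝ] Bww)
    (hQR1 : ∀ ε > (0:ℝ), ∃ δ₀ > (0:ℝ), ∀ δ, 0 < δ → δ < δ₀ → δ < δbar →
      ∀ f : Bw, ‖δ⁻¹ • (iw (Lw δ f) - iw (Lw 0 f)) - Ldotop f‖ ≤ ε * ‖f‖)
    -- (QR2) second derivative operator at h₀
    (Lddot : Bww)
    (hQR2 : Tendsto (fun δ : ℝ =>
        ‖(δ ^ 2)⁻¹ • (iw (Lw δ (is (iss (h 0))) - Lw 0 (is (iss (h 0)))) - δ • iw Ldot)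
          - Lddot‖) (𝓝[>] 0) (𝓝 0))
    -- (QR3) the resolvent extends to a bounded operator on V_ww
    (Resww : Bww →L[ℝ] Bww)
    (hResww : ∀ g : Bww, massww g = 0 → HasSum (fun n : ℕ => (Lww 0 ^ n) g) (Resww g)) :
    -- order-two Taylor expansion of δ ↦ h_δ, with convergence in the ww-norm
    Tendsto (fun δ : ℝ =>
        ‖(δ ^ 2)⁻¹ • (iw (is (iss (h δ)) - is (iss (h 0))) - δ • iw (Res Ldot))
          - Resww (Lddot + Ldotop (Res Ldot))‖) (𝓝[>] 0) (𝓝 0) := by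
  have h0 : (0 : ℝ) ∈ Ico 0 δbar := ⟨le_rfl, hδbar⟩
  have hmem : ∀ᶠ δ in 𝓝[>] (0 : ℝ), δ ∈ Ico 0 δbar :=
    mem_of_superset (Ioo_mem_nhdsGT hδbar) Ioo_subset_Ico_self
  have hfix_w : ∀ δ ∈ Ico 0 δbar, Lw δ (is (iss (h δ))) = is (iss (h δ)) := fun δ hδ => by
    rw [← hcomm_s δ hδ, ← hcomm_ss δ hδ, hfix δ hδ]
  have hmass_sub : ∀ δ ∈ Ico 0 δbar, mass (is (iss (h δ - h 0))) = 0 := fun δ hδ => by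
    simp only [map_sub, hprob_mass δ hδ, hprob_mass 0 h0, sub_self]
  have hpow : ∀ δ ∈ Ico 0 δbar,
      Tendsto (fun n => (Lw 0 ^ n) (is (iss (h δ)) - is (iss (h 0)))) atTop (𝓝 0) :=
    fun δ hδ => by
      simpa only [map_sub] using tendsto_pow_apply_of_semiconj his_norm (hcomm_s 0 h0)
        (squeeze_zero_norm (hconv _ (hmass_sub δ hδ)) (by simpa using ha.mul_const ‖h δ - h 0‖))
  have hstab := tendsto_map_of_isFixedPt hδbar hcomm_ss hK2 hfix hM ha
    fun δ hδ => hconv _ (hmass_sub δ hδ)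
  have hsmall := tendsto_inv_smul_apply_sub_apply hδbar hcomm_s hK1
    (tendsto_sub_nhds_zero_iff.mpr hstab)
  simp only [map_sub is] at hsmall
  have hlin := tendsto_inv_smul_sub_of_isFixedPt
    (fun y => hRes _ (by rw [map_sub, hmass 0 h0, sub_self])) (hfix_w 0 h0) (hmem.mono hfix_w)
    (hmem.mono hpow) hsmall (tendsto_iff_norm_sub_tendsto_zero.mpr hLdot)
  have hD : ∀ ε > 0, ∀ᶠ δ in 𝓝[>] (0 : ℝ), ∀ f,
      ‖δ⁻¹ • (iw (Lw δ f) - iw (Lw 0 f)) - Ldotop f‖ ≤ ε * ‖f‖ := fun ε hε => by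
    obtain ⟨δ₀, hδ₀, hδ₀ε⟩ := hQR1 ε hε
    filter_upwards [Ioo_mem_nhdsGT (lt_min hδ₀ hδbar)] with δ hδ
    exact hδ₀ε δ hδ.1 (hδ.2.trans_le (min_le_left _ _)) (hδ.2.trans_le (min_le_right _ _))
  exact tendsto_iff_norm_sub_tendsto_zero.mp
    (tendsto_sq_inv_smul_sub_of_isFixedPt hiw_norm (hcomm_w 0 h0)
      (fun x => hResww _ (by rw [hmass_compat, map_sub, hmass 0 h0, sub_self]))
      (hRes Ldot hLdotV) (hfix_w 0 h0) (hmem.mono hfix_w) (hmem.mono hpow) hlin hD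
      (tendsto_iff_norm_sub_tendsto_zero.mpr hQR2))

/-- **Abstract linear response theorem** (Theorem 2.1 / `thm:linresp`).
The nested spaces `B_ss ⊆ B_s ⊆ B_w` of signed measures are modeled by normed
spaces `Bss`, `Bs`, `Bw` together with injective norm-nonincreasing linear
inclusions `iss : Bss → Bs`, `is : Bs → Bw`; the continuous mass functional
`μ ↦ μ(X)` is `mass : Bw →L[ℝ] ℝ` (hence defined on all three spaces by
restriction); a Markov operator preserves the mass and positivity. -/
theorem quadratic_response
    {Bss Bs Bw : Type*}
    [NormedAddCommGroup Bss] [NormedSpace ℝ Bss]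
    [NormedAddCommGroup Bs] [NormedSpace ℝ Bs]
    [NormedAddCommGroup Bw] [NormedSpace ℝ Bw]
    [PartialOrder Bw]
    (iss : Bss →ₗ[ℝ] Bs) (is : Bs →ₗ[ℝ] Bw)
    (hiss_inj : Function.Injective iss) (his_inj : Function.Injective is)
    (hiss_norm : ∀ x : Bss, ‖iss x‖ ≤ ‖x‖) (his_norm : ∀ x : Bs, ‖is x‖ ≤ ‖x‖)
    (mass : Bw →L[ℝ] ℝ)
    (δbar : ℝ) (hδbar : 0 < δbar)
    -- the family of operators, acting (compatibly) on the three spaces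
    (Lss : ℝ → Bss →L[ℝ] Bss) (Ls : ℝ → Bs →L[ℝ] Bs) (Lw : ℝ → Bw →L[ℝ] Bw)
    (hcomm_ss : ∀ δ, δ ∈ Ico 0 δbar → ∀ x : Bss, iss (Lss δ x) = Ls δ (iss x))
    (hcomm_s : ∀ δ, δ ∈ Ico 0 δbar → ∀ x : Bs, is (Ls δ x) = Lw δ (is x))
    -- Markov: preservation of mass and of positivity
    (hmass : ∀ δ, δ ∈ Ico 0 δbar → ∀ x : Bw, mass (Lw δ x) = mass x)
    (hpos : ∀ δ, δ ∈ Ico 0 δbar → ∀ x : Bw, 0 ≤ x → 0 ≤ Lw δ x)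
    -- (LR1) regularity bounds: fixed probability measures, uniformly bounded in B_ss
    (h : ℝ → Bss) (M : ℝ)
    (hfix : ∀ δ, δ ∈ Ico 0 δbar → Lss δ (h δ) = h δ)
    (hprob_mass : ∀ δ, δ ∈ Ico 0 δbar → mass (is (iss (h δ))) = 1)
    (hprob_pos : ∀ δ, δ ∈ Ico 0 δbar → 0 ≤ is (iss (h δ)))
    (hM : ∀ δ, δ ∈ Ico 0 δbar → ‖h δ‖ ≤ M)
    -- (LR2) convergence to equilibrium for the unperturbed operator
    (a : ℕ → ℝ) (ha : Tendsto a atTop (𝓝 0))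
    (hconv : ∀ g : Bss, mass (is (iss g)) = 0 → ∀ n : ℕ, ‖(Ls 0 ^ n) (iss g)‖ ≤ a n * ‖g‖)
    -- (LR3) the resolvent `(Id - L₀)⁻¹ = ∑ L₀ⁱ` is a bounded operator on V_w
    (Res : Bw →L[ℝ] Bw)
    (hRes : ∀ g : Bw, mass g = 0 → HasSum (fun n : ℕ => (Lw 0 ^ n) g) (Res g))
    -- (LR4) small perturbation and derivative operator
    (K : ℝ)
    (hK1 : ∀ δ, δ ∈ Ico 0 δbar → ∀ f : Bs, ‖is (Ls 0 f) - is (Ls δ f)‖ ≤ K * δ * ‖f‖)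
    (hK2 : ∀ δ, δ ∈ Ico 0 δbar → ∀ f : Bss, ‖iss (Lss 0 f) - iss (Lss δ f)‖ ≤ K * δ * ‖f‖)
    (Ldot : Bw) (hLdotV : mass Ldot = 0)
    (hLdot : Tendsto
      (fun δ : ℝ => ‖δ⁻¹ • (Lw δ (is (iss (h 0))) - Lw 0 (is (iss (h 0)))) - Ldot‖)
      (𝓝[>] 0) (𝓝 0))
    -- the further, weaker space `B_ww ⊇ B_w`
    {Bww : Type*} [NormedAddCommGroup Bww] [NormedSpace ℝ Bww]
    (iw : Bw →ₗ[ℝ] Bww) (hiw_inj : Function.Injective iw)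
    (hiw_norm : ∀ x : Bw, ‖iw x‖ ≤ ‖x‖)
    (massww : Bww →L[ℝ] ℝ) (hmass_compat : ∀ x : Bw, massww (iw x) = mass x)
    (Lww : ℝ → Bww →L[ℝ] Bww)
    (hcomm_w : ∀ δ, δ ∈ Ico 0 δbar → ∀ x : Bw, iw (Lw δ x) = Lww δ (iw x))
    -- (QR1) the derivative operator extends to a bounded operator `B_w → V_ww`,
    -- with uniform convergence of the divided differences in operator norm
    (Ldotop : Bw →L[ℝ] Bww)
    (hLdotopV : ∀ f : Bw, massww (Ldotop f) = 0)
    (hLdotop_ext : Ldotop (is (iss (h 0))) = iw Ldot)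
    (hQR1 : ∀ ε > (0:ℝ), ∃ δ₀ > (0:ℝ), ∀ δ, 0 < δ → δ < δ₀ → δ < δbar →
      ∀ f : Bw, ‖δ⁻¹ • (iw (Lw δ f) - iw (Lw 0 f)) - Ldotop f‖ ≤ ε * ‖f‖)
    -- (QR2) second derivative operator at h₀
    (Lddot : Bww) (hLddotV : massww Lddot = 0)
    (hQR2 : Tendsto (fun δ : ℝ =>
        ‖(δ ^ 2)⁻¹ • (iw (Lw δ (is (iss (h 0))) - Lw 0 (is (iss (h 0)))) - δ • iw Ldot)
          - Lddot‖) (𝓝[>] 0) (𝓝 0))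
    -- (QR3) the resolvent extends to a bounded operator on V_ww
    (Resww : Bww →L[ℝ] Bww)
    (hResww : ∀ g : Bww, massww g = 0 → HasSum (fun n : ℕ => (Lww 0 ^ n) g) (Resww g)) :
    -- order-two Taylor expansion of δ ↦ h_δ, with convergence in the ww-norm
    Tendsto (fun δ : ℝ =>
        ‖(δ ^ 2)⁻¹ • (iw (is (iss (h δ)) - is (iss (h 0))) - δ • iw (Res Ldot))
          - Resww (Lddot + Ldotop (Res Ldot))‖) (𝓝[>] 0) (𝓝 0) :=
  quadratic_response_general iss is his_norm mass δbar hδbar Lss Ls Lw hcomm_ss hcomm_s hmass h M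
    hfix hprob_mass hM a ha hconv Res hRes K hK1 hK2 Ldot hLdotV hLdot iw hiw_norm massww
    hmass_compat Lww hcomm_w Ldotop hQR1 Lddot hQR2 Resww hResww
end

section
/- Let (D_δ) be a family of circle maps with D_δ = Id + δS + o(δ) in C⁰-topology for some S ∈ C²(S¹, ℝ), i.e. ‖D_δ − Id − δS‖_{C⁰}/|δ| → 0. Define R : L¹(S¹) → W^{−1,1}(S¹) by Rf := −(f·S)'. Then ‖(L_{D_δ} − L_{D_0})/δ − R‖_{L¹→D_2} → 0 as δ → 0. -/
open Real Filter Topology MeasureTheory intervalIntegral Set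

private lemma deriv_lip_aux {g : ℝ → ℝ} (hg : ContDiff ℝ 2 g)
    (hb : ∀ x : ℝ, |deriv (deriv g) x| ≤ 1) (x y : ℝ) :
    |deriv g y - deriv g x| ≤ |y - x| := by
  have h2 : ContDiff ℝ (1+1) g := by norm_num [hg]
  have hdg : ContDiff ℝ 1 (deriv g) := (contDiff_succ_iff_deriv.mp h2).2.2
  have := (convex_univ (𝕜 := ℝ) (E := ℝ)).norm_image_sub_le_of_norm_deriv_le
    (f := deriv g) (C := 1)
    (fun t _ => (hdg.differentiable one_ne_zero) t)
    (fun t _ => hb t) (mem_univ x) (mem_univ y)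
  simpa using this

private lemma taylor_bound_aux {g : ℝ → ℝ} (hg : ContDiff ℝ 2 g)
    (hb : ∀ x : ℝ, |deriv (deriv g) x| ≤ 1) (x y : ℝ) :
    |g y - g x - deriv g x * (y - x)| ≤ |y - x| ^ 2 := by
  have hgdiff : Differentiable ℝ g := hg.differentiable (by norm_num)
  set F : ℝ → ℝ := fun t => g t - deriv g x * t with hF
  have hFd : ∀ t, HasDerivAt F (deriv g t - deriv g x) t := by
    intro t
    have h1 : HasDerivAt (fun t : ℝ => deriv g x * t) (deriv g x) t := by
      simpa using (hasDerivAt_id t).const_mul (deriv g x)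
    exact ((hgdiff t).hasDerivAt).sub h1
  have hdF : ∀ t, deriv F t = deriv g t - deriv g x := fun t => (hFd t).deriv
  have hbound : ∀ t ∈ uIcc x y, ‖deriv F t‖ ≤ |y - x| := by
    intro t ht
    rw [hdF, Real.norm_eq_abs]
    have h1 : |deriv g t - deriv g x| ≤ |t - x| := deriv_lip_aux hg hb x t
    have h2 : |t - x| ≤ |y - x| := by
      rcases mem_uIcc.mp ht with ⟨h3, h4⟩ | ⟨h3, h4⟩
      · rw [abs_of_nonneg (by linarith)]
        calc t - x ≤ y - x := by linarith
          _ ≤ |y - x| := le_abs_self _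
      · rw [abs_of_nonpos (by linarith)]
        calc -(t - x) ≤ -(y - x) := by linarith
          _ ≤ |y - x| := neg_le_abs _
    linarith
  have key := (convex_uIcc x y).norm_image_sub_le_of_norm_deriv_le
    (fun t _ => (hFd t).differentiableAt) hbound left_mem_uIcc right_mem_uIcc
  have hFeq : F y - F x = g y - g x - deriv g x * (y - x) := by simp [hF]; ring
  rw [hFeq, Real.norm_eq_abs, Real.norm_eq_abs] at key
  calc |g y - g x - deriv g x * (y - x)| ≤ |y - x| * |y - x| := key
    _ = |y - x| ^ 2 := (sq (|y - x|)).symm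

/-- **First-order Taylor expansion of the transfer operators of a family of
perturbations of the identity** (Proposition `prop:transferopisC1`).
Circle maps are modeled by lifts; the family `D_δ = Id + δS + o(δ)` in the
`C⁰` topology, with `S ∈ C²(S¹,ℝ)`.  The derivative operator is
`Rf = -(f·S)'`, and the conclusion is the convergence
`‖(L_{D_δ} - L_{D_0})/δ - R‖_{L¹ → D₂} → 0`, expressed through the duality
pairings `⟨L_{D_δ}f, g⟩ = ⟨f, g∘D_δ⟩` and `⟨Rf, g⟩ = ∫ f S g'` against `C²`
test functions `g` of unit `C²` norm and `f` of unit `L¹` norm. -/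
theorem transfer_operator_first_order_Taylor
    (δbar : ℝ) (hδbar : 0 < δbar)
    (S : ℝ → ℝ) (hS : ContDiff ℝ 2 S) (hSper : Function.Periodic S 1)
    (D : ℝ → ℝ → ℝ)
    (hDcont : ∀ δ ∈ Icc (0:ℝ) δbar, Continuous (D δ))
    (hDlift : ∀ δ ∈ Icc (0:ℝ) δbar, ∀ x : ℝ, D δ (x + 1) = D δ x + 1)
    (hD0 : D 0 = id)
    -- `D_δ = Id + δS + o(δ)` in the `C⁰` topology
    (hexp : ∀ ε > (0:ℝ), ∃ δ₀ > (0:ℝ), ∀ δ, 0 < δ → δ < δ₀ → δ ≤ δbar →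
      ∀ x : ℝ, |D δ x - x - δ * S x| ≤ ε * δ) :
    ∀ ε > (0:ℝ), ∃ δ₀ > (0:ℝ), ∀ δ, 0 < δ → δ < δ₀ → δ ≤ δbar →
      ∀ f g : ℝ → ℝ,
        Function.Periodic f 1 → IntervalIntegrable f volume 0 1 →
        (∫ x in (0:ℝ)..1, |f x|) ≤ 1 →
        Function.Periodic g 1 → ContDiff ℝ 2 g →
        (∀ j ≤ 2, ∀ x : ℝ, |iteratedDeriv j g x| ≤ 1) →
        |δ⁻¹ * (∫ x in (0:ℝ)..1, f x * (g (D δ x) - g x)) -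
            ∫ x in (0:ℝ)..1, f x * S x * deriv g x| ≤ ε := by
  intro ε hε
  -- a global bound `M` on `|S|`, from compactness and periodicity
  obtain ⟨x0, _, hx0⟩ := isCompact_Icc.exists_isMaxOn
    (Set.nonempty_Icc.mpr (by norm_num : (0:ℝ) ≤ 1))
    ((continuous_abs.comp hS.continuous).continuousOn (s := Icc (0:ℝ) 1))
  set M := |S x0| with hMdef
  have hM : ∀ x : ℝ, |S x| ≤ M := by
    intro x
    have hx : Int.fract x ∈ Icc (0:ℝ) 1 := ⟨Int.fract_nonneg x, (Int.fract_lt_one x).le⟩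
    have hfr : S (Int.fract x) = S x := by
      rw [← Int.self_sub_floor]
      simpa using hSper.sub_int_mul_eq (x := x) (⌊x⌋)
    have h2 : |S (Int.fract x)| ≤ |S x0| := hx0 hx
    rw [hfr] at h2
    exact h2
  have hM0 : 0 ≤ M := abs_nonneg _
  obtain ⟨δ₁, hδ₁pos, hδ₁p⟩ := hexp (ε/2) (by linarith)
  refine ⟨min δ₁ (ε/2/((M+ε/2)^2+1)), by positivity, ?_⟩
  intro δ hδ0 hδlt hδbar' f g hfper hfint hfL1 hgper hgC hgB
  have hδ1 : δ < δ₁ := lt_of_lt_of_le hδlt (min_le_left _ _)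
  have hδ2 : δ < ε/2/((M+ε/2)^2+1) := lt_of_lt_of_le hδlt (min_le_right _ _)
  have hδsmall : δ * (M+ε/2)^2 ≤ ε/2 := by
    rw [div_div] at hδ2
    have h0 : (0:ℝ) < 2*((M+ε/2)^2+1) := by positivity
    have := (lt_div_iff₀ h0).mp hδ2
    nlinarith [sq_nonneg (M+ε/2)]
  have hE := hδ₁p δ hδ0 hδ1 hδbar'
  -- derivative bounds for `g`
  have hg1 : ∀ x, |deriv g x| ≤ 1 := by
    intro x; have := hgB 1 (by norm_num) x; rwa [iteratedDeriv_one] at this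
  have hg2 : ∀ x, |deriv (deriv g) x| ≤ 1 := by
    intro x; have := hgB 2 le_rfl x
    rwa [show (2:ℕ) = 1+1 from rfl, iteratedDeriv_succ, iteratedDeriv_one] at this
  -- the key pointwise bound
  have key : ∀ x : ℝ, |δ⁻¹ * (g (D δ x) - g x) - S x * deriv g x| ≤ ε := by
    intro x
    have he := hE x
    have hyx : |D δ x - x| ≤ δ * (M + ε/2) := by
      have h1 : |δ * S x| ≤ δ * M := by
        rw [abs_mul, abs_of_pos hδ0]
        exact mul_le_mul_of_nonneg_left (hM x) hδ0.le
      calc |D δ x - x| = |(D δ x - x - δ * S x) + δ * S x| := by ring_nf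
        _ ≤ |D δ x - x - δ * S x| + |δ * S x| := abs_add_le _ _
        _ ≤ ε/2*δ + δ * M := add_le_add he h1
        _ = δ * (M + ε/2) := by ring
    have hT := taylor_bound_aux hgC hg2 x (D δ x)
    have expand : δ⁻¹ * (g (D δ x) - g x) - S x * deriv g x
        = δ⁻¹ * (g (D δ x) - g x - deriv g x * (D δ x - x))
          + δ⁻¹ * (deriv g x * (D δ x - x - δ * S x)) := by
      field_simp
      ring
    rw [expand]
    have hδinv : (0:ℝ) < δ⁻¹ := inv_pos.mpr hδ0
    have h1 : |δ⁻¹ * (g (D δ x) - g x - deriv g x * (D δ x - x))| ≤ ε/2 := by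
      rw [abs_mul, abs_of_pos hδinv]
      have hsq : |g (D δ x) - g x - deriv g x * (D δ x - x)| ≤ (δ * (M + ε/2))^2 :=
        hT.trans (pow_le_pow_left₀ (abs_nonneg _) hyx 2)
      calc δ⁻¹ * |g (D δ x) - g x - deriv g x * (D δ x - x)|
          ≤ δ⁻¹ * (δ * (M + ε/2))^2 := mul_le_mul_of_nonneg_left hsq hδinv.le
        _ = δ * (M + ε/2)^2 := by field_simp
        _ ≤ ε/2 := hδsmall
    have h2 : |δ⁻¹ * (deriv g x * (D δ x - x - δ * S x))| ≤ ε/2 := by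
      rw [abs_mul, abs_mul, abs_of_pos hδinv]
      have : |deriv g x| * |D δ x - x - δ * S x| ≤ 1 * (ε/2*δ) :=
        mul_le_mul (hg1 x) he (abs_nonneg _) zero_le_one
      calc δ⁻¹ * (|deriv g x| * |D δ x - x - δ * S x|) ≤ δ⁻¹ * (1 * (ε/2*δ)) :=
            mul_le_mul_of_nonneg_left this hδinv.le
        _ = ε/2 := by field_simp
    calc |δ⁻¹ * (g (D δ x) - g x - deriv g x * (D δ x - x))
          + δ⁻¹ * (deriv g x * (D δ x - x - δ * S x))|
        ≤ |δ⁻¹ * (g (D δ x) - g x - deriv g x * (D δ x - x))|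
          + |δ⁻¹ * (deriv g x * (D δ x - x - δ * S x))| := abs_add_le _ _
      _ ≤ ε/2 + ε/2 := add_le_add h1 h2
      _ = ε := by ring
  -- integrability
  have hDδcont : Continuous (D δ) := hDcont δ ⟨hδ0.le, hδbar'⟩
  have hcont1 : Continuous fun x => g (D δ x) - g x :=
    (hgC.continuous.comp hDδcont).sub hgC.continuous
  have hderivg : Continuous (deriv g) := hgC.continuous_deriv (by norm_num)
  have hint1 : IntervalIntegrable (fun x => f x * (g (D δ x) - g x)) volume 0 1 :=
    hfint.mul_continuousOn hcont1.continuousOn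
  have hint2 : IntervalIntegrable (fun x => f x * S x * deriv g x) volume 0 1 := by
    have := hfint.mul_continuousOn (g := fun x => S x * deriv g x)
      ((hS.continuous.mul hderivg).continuousOn)
    simpa [mul_assoc] using this
  have hint3 : IntervalIntegrable (fun x => δ⁻¹ * (f x * (g (D δ x) - g x))
        - f x * S x * deriv g x) volume 0 1 := (hint1.const_mul _).sub hint2
  have heq : δ⁻¹ * (∫ x in (0:ℝ)..1, f x * (g (D δ x) - g x)) -
      ∫ x in (0:ℝ)..1, f x * S x * deriv g x
      = ∫ x in (0:ℝ)..1, (δ⁻¹ * (f x * (g (D δ x) - g x)) - f x * S x * deriv g x) := by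
    rw [← intervalIntegral.integral_const_mul,
      ← intervalIntegral.integral_sub (hint1.const_mul _) hint2]
  rw [heq]
  have hptwise : ∀ x ∈ Icc (0:ℝ) 1,
      |δ⁻¹ * (f x * (g (D δ x) - g x)) - f x * S x * deriv g x| ≤ ε * |f x| := by
    intro x _
    have hre : δ⁻¹ * (f x * (g (D δ x) - g x)) - f x * S x * deriv g x
        = f x * (δ⁻¹ * (g (D δ x) - g x) - S x * deriv g x) := by ring
    rw [hre, abs_mul, mul_comm]
    exact mul_le_mul_of_nonneg_right (key x) (abs_nonneg _)
  calc |∫ x in (0:ℝ)..1, (δ⁻¹ * (f x * (g (D δ x) - g x)) - f x * S x * deriv g x)|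
      ≤ ∫ x in (0:ℝ)..1, |δ⁻¹ * (f x * (g (D δ x) - g x)) - f x * S x * deriv g x| :=
        intervalIntegral.abs_integral_le_integral_abs (by norm_num)
    _ ≤ ∫ x in (0:ℝ)..1, ε * |f x| := by
        apply intervalIntegral.integral_mono_on (by norm_num) hint3.abs
          ((hfint.abs).const_mul ε) hptwise
    _ = ε * ∫ x in (0:ℝ)..1, |f x| := intervalIntegral.integral_const_mul _ _
    _ ≤ ε * 1 := mul_le_mul_of_nonneg_left hfL1 hε.le
    _ = ε := mul_one ε
end

section
/- Let (D_δ) be a family of circle maps with second-order expansion D_δ = Id + δS₁ + (δ²/2)S₂ + o(δ²) in the C⁰-topology, where S₁, S₂ ∈ C³(S¹, ℝ). Define R f := −(f S₁)' and Q f := (f S₁²)'' − (f S₂)'. Then ‖(L_{D_δ} − Id − δR)/δ² − Q/2‖_{L¹→D_3} → 0 as δ → 0. -/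
open Real Filter Topology MeasureTheory intervalIntegral Set

lemma taylor3_aux (g : ℝ → ℝ) (hg : ContDiff ℝ 3 g)
    (hb3 : ∀ x : ℝ, |iteratedDeriv 3 g x| ≤ 1) (x y : ℝ) :
    |g y - g x - deriv g x * (y - x) - iteratedDeriv 2 g x * (y - x) ^ 2 / 2|
      ≤ |y - x| ^ 3 := by
  have h1d : Differentiable ℝ (iteratedDeriv 1 g) :=
    hg.differentiable_iteratedDeriv 1 (by norm_num)
  have h2d : Differentiable ℝ (iteratedDeriv 2 g) :=
    hg.differentiable_iteratedDeriv 2 (by norm_num)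
  have hdg : Differentiable ℝ g := hg.differentiable (by norm_num)
  have hdd : Differentiable ℝ (deriv g) := by rw [← iteratedDeriv_one]; exact h1d
  have e2 : iteratedDeriv 2 g = deriv (deriv g) := by
    rw [show (2:ℕ) = 1 + 1 from rfl, iteratedDeriv_succ, iteratedDeriv_one]
  have e3 : iteratedDeriv 3 g = deriv (iteratedDeriv 2 g) := by
    rw [show (3:ℕ) = 2 + 1 from rfl, iteratedDeriv_succ]
  have d2 : ∀ z : ℝ, HasDerivAt (deriv g) (iteratedDeriv 2 g z) z := by
    intro z; rw [e2]; exact (hdd z).hasDerivAt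
  have d3 : ∀ z : ℝ, HasDerivAt (iteratedDeriv 2 g) (iteratedDeriv 3 g z) z := by
    intro z; rw [e3]; exact (h2d z).hasDerivAt
  -- Lipschitz bound for the second derivative
  have lip : ∀ z : ℝ, |iteratedDeriv 2 g z - iteratedDeriv 2 g x| ≤ 1 * |z - x| := by
    intro z
    have := convex_univ.norm_image_sub_le_of_norm_hasDerivWithin_le
      (f := iteratedDeriv 2 g) (f' := iteratedDeriv 3 g) (C := 1)
      (fun w _ => (d3 w).hasDerivWithinAt) (fun w _ => by simpa using hb3 w)
      (mem_univ x) (mem_univ z)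
    simpa [Real.norm_eq_abs] using this
  have key : ∀ w ∈ uIcc x y, |w - x| ≤ |y - x| := by
    intro w hw
    rcases Set.mem_uIcc.mp hw with ⟨h1, h2⟩ | ⟨h1, h2⟩
    · rw [abs_of_nonneg (by linarith), abs_of_nonneg (by linarith)]; linarith
    · rw [abs_of_nonpos (by linarith), abs_of_nonpos (by linarith)]; linarith
  set φ' : ℝ → ℝ := fun z => deriv g z - deriv g x - iteratedDeriv 2 g x * (z - x) with hφ'def
  have hφ' : ∀ z : ℝ, HasDerivAt φ' (iteratedDeriv 2 g z - iteratedDeriv 2 g x) z := by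
    intro z
    have h := ((d2 z).sub_const (deriv g x)).sub
      (((hasDerivAt_id z).sub_const x).const_mul (iteratedDeriv 2 g x))
    simpa [hφ'def, mul_one, Pi.sub_def] using h
  have step2 : ∀ z ∈ uIcc x y, |φ' z| ≤ |y - x| * |y - x| := by
    intro z hz
    have := (convex_uIcc x y).norm_image_sub_le_of_norm_hasDerivWithin_le
      (f := φ') (f' := fun w => iteratedDeriv 2 g w - iteratedDeriv 2 g x) (C := |y - x|)
      (fun w _ => (hφ' w).hasDerivWithinAt)
      (fun w hw => by
        have := (lip w).trans (by simpa using key w hw)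
        simpa [Real.norm_eq_abs] using this)
      left_mem_uIcc hz
    have hx0 : φ' x = 0 := by simp [hφ'def]
    rw [Real.norm_eq_abs, Real.norm_eq_abs, hx0, sub_zero] at this
    exact this.trans (by
      have := key z hz
      have h0 : (0:ℝ) ≤ |y - x| := abs_nonneg _
      nlinarith)
  set φ : ℝ → ℝ := fun z =>
    g z - g x - deriv g x * (z - x) - iteratedDeriv 2 g x * (z - x) ^ 2 / 2 with hφdef
  have hφ : ∀ z : ℝ, HasDerivAt φ (φ' z) z := by
    intro z
    have hsq : HasDerivAt (fun w : ℝ => (w - x) ^ 2) (2 * (z - x)) z := by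
      simpa [Pi.pow_def] using ((hasDerivAt_id z).sub_const x).pow 2
    have h := (((hdg z).hasDerivAt.sub_const (g x)).sub
        ((hasDerivAt_id z).sub_const x |>.const_mul (deriv g x))).sub
        ((hsq.const_mul (iteratedDeriv 2 g x)).div_const 2)
    have : HasDerivAt φ
        (deriv g z - deriv g x * 1 - iteratedDeriv 2 g x * (2 * (z - x)) / 2) z := h
    convert this using 1
    simp [hφ'def]; ring
  have final := (convex_uIcc x y).norm_image_sub_le_of_norm_hasDerivWithin_le
    (f := φ) (f' := φ') (C := |y - x| * |y - x|)
    (fun w _ => (hφ w).hasDerivWithinAt)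
    (fun w hw => by simpa [Real.norm_eq_abs] using step2 w hw)
    left_mem_uIcc right_mem_uIcc
  have hx0 : φ x = 0 := by simp [hφdef]
  rw [Real.norm_eq_abs, Real.norm_eq_abs, hx0, sub_zero] at final
  calc |g y - g x - deriv g x * (y - x) - iteratedDeriv 2 g x * (y - x) ^ 2 / 2|
      = |φ y| := by simp [hφdef]
    _ ≤ |y - x| * |y - x| * |y - x| := final
    _ = |y - x| ^ 3 := by ring

set_option maxHeartbeats 1600000 in
/-- **Second-order Taylor expansion of the transfer operators of a family of
perturbations of the identity** (Proposition `prop:transferopisC2`).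
The family satisfies `D_δ = Id + δS₁ + (δ²/2)S₂ + o(δ²)` in the `C⁰`
topology with `S₁, S₂ ∈ C³(S¹,ℝ)`.  With `Rf = -(fS₁)'` and
`Qf = (fS₁²)'' - (fS₂)'`, the conclusion is
`‖(L_{D_δ} - Id - δR)/δ² - Q/2‖_{L¹ → D₃} → 0`, expressed through the
duality pairings `⟨L_{D_δ}f, g⟩ = ⟨f, g∘D_δ⟩`, `⟨Rf, g⟩ = ∫ f S₁ g'` and
`⟨Qf, g⟩ = ∫ f S₁² g'' + ∫ f S₂ g'` against `C³` test functions of unit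
`C³` norm and `f` of unit `L¹` norm. -/
theorem transfer_operator_second_order_Taylor
    (δbar : ℝ) (hδbar : 0 < δbar)
    (S₁ S₂ : ℝ → ℝ) (hS₁ : ContDiff ℝ 3 S₁) (hS₂ : ContDiff ℝ 3 S₂)
    (hS₁per : Function.Periodic S₁ 1) (hS₂per : Function.Periodic S₂ 1)
    (D : ℝ → ℝ → ℝ)
    (hDcont : ∀ δ ∈ Icc (0:ℝ) δbar, Continuous (D δ))
    (hDlift : ∀ δ ∈ Icc (0:ℝ) δbar, ∀ x : ℝ, D δ (x + 1) = D δ x + 1)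
    (hD0 : D 0 = id)
    -- `D_δ = Id + δS₁ + (δ²/2)S₂ + o(δ²)` in the `C⁰` topology
    (hexp : ∀ ε > (0:ℝ), ∃ δ₀ > (0:ℝ), ∀ δ, 0 < δ → δ < δ₀ → δ ≤ δbar →
      ∀ x : ℝ, |D δ x - x - δ * S₁ x - δ ^ 2 / 2 * S₂ x| ≤ ε * δ ^ 2) :
    ∀ ε > (0:ℝ), ∃ δ₀ > (0:ℝ), ∀ δ, 0 < δ → δ < δ₀ → δ ≤ δbar →
      ∀ f g : ℝ → ℝ,
        Function.Periodic f 1 → IntervalIntegrable f volume 0 1 →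
        (∫ x in (0:ℝ)..1, |f x|) ≤ 1 →
        Function.Periodic g 1 → ContDiff ℝ 3 g →
        (∀ j ≤ 3, ∀ x : ℝ, |iteratedDeriv j g x| ≤ 1) →
        |(δ ^ 2)⁻¹ * ((∫ x in (0:ℝ)..1, f x * (g (D δ x) - g x)) -
              δ * ∫ x in (0:ℝ)..1, f x * S₁ x * deriv g x) -
            (1 / 2) * ((∫ x in (0:ℝ)..1, f x * (S₁ x) ^ 2 * iteratedDeriv 2 g x) +
              ∫ x in (0:ℝ)..1, f x * S₂ x * deriv g x)| ≤ ε := by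
    -- a common bound for |S₁| and |S₂|
  obtain ⟨M₁, hM₁⟩ := (isCompact_Icc (a := (0:ℝ)) (b := 1)).exists_bound_of_continuousOn
    hS₁.continuous.continuousOn
  obtain ⟨M₂, hM₂⟩ := (isCompact_Icc (a := (0:ℝ)) (b := 1)).exists_bound_of_continuousOn
    hS₂.continuous.continuousOn
  set M : ℝ := max M₁ M₂ + 2 with hMdef
  have hM₁0 : (0:ℝ) ≤ M₁ := le_trans (abs_nonneg (S₁ 0))
    (by simpa [Real.norm_eq_abs] using hM₁ 0 (by norm_num))
  have hM2 : (2:ℝ) ≤ M := by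
    have := le_max_left M₁ M₂
    rw [hMdef]
    linarith
  have hMpos : (0:ℝ) < M := by linarith
  have hS₁b : ∀ x : ℝ, |S₁ x| ≤ M := by
    intro x
    obtain ⟨y, hy, hxy⟩ := hS₁per.exists_mem_Ico₀ one_pos x
    rw [hxy]
    have := hM₁ y (Ico_subset_Icc_self hy)
    rw [Real.norm_eq_abs] at this
    calc |S₁ y| ≤ M₁ := this
      _ ≤ M := by rw [hMdef]; linarith [le_max_left M₁ M₂]
  have hS₂b : ∀ x : ℝ, |S₂ x| ≤ M := by
    intro x
    obtain ⟨y, hy, hxy⟩ := hS₂per.exists_mem_Ico₀ one_pos x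
    rw [hxy]
    have := hM₂ y (Ico_subset_Icc_self hy)
    rw [Real.norm_eq_abs] at this
    calc |S₂ y| ≤ M₂ := this
      _ ≤ M := by rw [hMdef]; linarith [le_max_right M₁ M₂]
  clear_value M
  intro ε hε
  set ε' : ℝ := min 1 (ε / 2) with hε'def
  have hε'pos : 0 < ε' := lt_min one_pos (by linarith)
  have hε'le1 : ε' ≤ 1 := min_le_left _ _
  have hε'leε : ε' ≤ ε / 2 := min_le_right _ _
  clear_value ε'
  obtain ⟨δ₁, hδ₁pos, hδ₁⟩ := hexp ε' hε'pos
  refine ⟨min δ₁ (min 1 (ε / (20 * M ^ 3))), ?_, ?_⟩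
  · refine lt_min hδ₁pos (lt_min one_pos ?_)
    positivity
  intro δ hδpos hδlt hδbar' f g hfper hfInt hfL1 hgper hg hgb
  have hδδ₁ : δ < δ₁ := lt_of_lt_of_le hδlt (min_le_left _ _)
  have hδ1 : δ ≤ 1 := le_of_lt (lt_of_lt_of_le hδlt ((min_le_right _ _).trans (min_le_left _ _)))
  have hδsmall : δ < ε / (20 * M ^ 3) :=
    lt_of_lt_of_le hδlt ((min_le_right _ _).trans (min_le_right _ _))
  have hδmem : δ ∈ Icc (0:ℝ) δbar := ⟨le_of_lt hδpos, hδbar'⟩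
  have hδsq : (0:ℝ) < δ ^ 2 := by positivity
  have hr := hδ₁ δ hδpos hδδ₁ hδbar'
  -- continuity facts
  have hgc : Continuous g := hg.continuous
  have hg'c : Continuous (deriv g) := by
    have := hg.continuous_iteratedDeriv 1 (by norm_num)
    rwa [iteratedDeriv_one] at this
  have hg''c : Continuous (iteratedDeriv 2 g) := hg.continuous_iteratedDeriv 2 (by norm_num)
  have hDc : Continuous (D δ) := hDcont δ hδmem
  -- the error function
  set E : ℝ → ℝ := fun x =>
    g (D δ x) - g x - δ * (S₁ x * deriv g x)
      - δ ^ 2 / 2 * (S₁ x ^ 2 * iteratedDeriv 2 g x) - δ ^ 2 / 2 * (S₂ x * deriv g x)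
    with hEdef
  have hEc : Continuous E := by
    apply Continuous.sub
    apply Continuous.sub
    apply Continuous.sub
    · exact (hgc.comp hDc).sub hgc
    · exact continuous_const.mul (hS₁.continuous.mul hg'c)
    · exact continuous_const.mul ((hS₁.continuous.pow 2).mul hg''c)
    · exact continuous_const.mul (hS₂.continuous.mul hg'c)
  -- pointwise bound on E
  have hEbound : ∀ x : ℝ, |E x| ≤ ε * δ ^ 2 := by
    intro x
    set y : ℝ := D δ x with hydef
    set r : ℝ := y - x - δ * S₁ x - δ ^ 2 / 2 * S₂ x with hrdef
    have hrb : |r| ≤ ε' * δ ^ 2 := hr x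
    have hg1b : |deriv g x| ≤ 1 := by
      have := hgb 1 (by norm_num) x; rwa [iteratedDeriv_one] at this
    have hg2b : |iteratedDeriv 2 g x| ≤ 1 := hgb 2 (by norm_num) x
    have hT := taylor3_aux g hg (fun z => hgb 3 le_rfl z) x y
    -- |y - x| ≤ 2 M δ
    have h1 : |y - x| ≤ 2 * M * δ := by
      have e : y - x = r + δ * S₁ x + δ ^ 2 / 2 * S₂ x := by rw [hrdef]; ring
      rw [e]
      calc |r + δ * S₁ x + δ ^ 2 / 2 * S₂ x|
          ≤ |r| + |δ * S₁ x| + |δ ^ 2 / 2 * S₂ x| := abs_add_three _ _ _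
        _ ≤ ε' * δ ^ 2 + δ * M + δ ^ 2 / 2 * M := by
            refine add_le_add (add_le_add hrb ?_) ?_
            · rw [abs_mul, abs_of_nonneg hδpos.le]
              exact mul_le_mul_of_nonneg_left (hS₁b x) hδpos.le
            · rw [abs_mul, abs_of_nonneg (by positivity : (0:ℝ) ≤ δ ^ 2 / 2)]
              exact mul_le_mul_of_nonneg_left (hS₂b x) (by positivity)
        _ ≤ 2 * M * δ := by
            have a1 : ε' * δ ^ 2 ≤ δ ^ 2 := by nlinarith [hε'le1, hδsq.le]
            have a2 : δ ^ 2 ≤ δ := by nlinarith [hδ1, hδpos]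
            have a3 : δ ^ 2 * M ≤ δ * M := mul_le_mul_of_nonneg_right a2 hMpos.le
            have a4 : (0:ℝ) ≤ δ * (M - 2) := mul_nonneg hδpos.le (by linarith)
            nlinarith [a1, a2, a3, a4]
    have h3 : |y - x - δ * S₁ x| ≤ M * δ ^ 2 := by
      have e : y - x - δ * S₁ x = r + δ ^ 2 / 2 * S₂ x := by rw [hrdef]; ring
      rw [e]
      calc |r + δ ^ 2 / 2 * S₂ x| ≤ |r| + |δ ^ 2 / 2 * S₂ x| := abs_add_le _ _
        _ ≤ ε' * δ ^ 2 + δ ^ 2 / 2 * M := by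
            refine add_le_add hrb ?_
            rw [abs_mul, abs_of_nonneg (by positivity : (0:ℝ) ≤ δ ^ 2 / 2)]
            exact mul_le_mul_of_nonneg_left (hS₂b x) (by positivity)
        _ ≤ M * δ ^ 2 := by nlinarith
    have h4 : |y - x + δ * S₁ x| ≤ 3 * M * δ := by
      calc |y - x + δ * S₁ x| ≤ |y - x| + |δ * S₁ x| := abs_add_le _ _
        _ ≤ 2 * M * δ + δ * M := by
            refine add_le_add h1 ?_
            rw [abs_mul, abs_of_nonneg hδpos.le]
            exact mul_le_mul_of_nonneg_left (hS₁b x) hδpos.le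
        _ = 3 * M * δ := by ring
    -- decomposition
    have hdec : E x =
        (g y - g x - deriv g x * (y - x) - iteratedDeriv 2 g x * (y - x) ^ 2 / 2)
        + deriv g x * r
        + iteratedDeriv 2 g x / 2 * ((y - x - δ * S₁ x) * (y - x + δ * S₁ x)) := by
      rw [hEdef, hrdef, hydef]; ring
    rw [hdec]
    have hTb : |g y - g x - deriv g x * (y - x) - iteratedDeriv 2 g x * (y - x) ^ 2 / 2|
        ≤ (2 * M * δ) ^ 3 := by
      refine hT.trans ?_
      exact pow_le_pow_left₀ (abs_nonneg _) h1 3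
    have h2b : |deriv g x * r| ≤ ε' * δ ^ 2 := by
      rw [abs_mul]
      calc |deriv g x| * |r| ≤ 1 * (ε' * δ ^ 2) :=
        mul_le_mul hg1b hrb (abs_nonneg _) zero_le_one
      _ = ε' * δ ^ 2 := one_mul _
    have h5b : |iteratedDeriv 2 g x / 2 * ((y - x - δ * S₁ x) * (y - x + δ * S₁ x))|
        ≤ 1 / 2 * (M * δ ^ 2 * (3 * M * δ)) := by
      rw [abs_mul, abs_mul, abs_div]
      have : |iteratedDeriv 2 g x| / |(2:ℝ)| ≤ 1 / 2 := by
        rw [abs_two]; linarith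
      refine mul_le_mul this ?_ (by positivity) (by norm_num)
      exact mul_le_mul h3 h4 (abs_nonneg _) (by positivity)
    calc |_ + deriv g x * r + _|
        ≤ |(g y - g x - deriv g x * (y - x) - iteratedDeriv 2 g x * (y - x) ^ 2 / 2)
            + deriv g x * r|
          + |iteratedDeriv 2 g x / 2 * ((y - x - δ * S₁ x) * (y - x + δ * S₁ x))| :=
            abs_add_le _ _
      _ ≤ |g y - g x - deriv g x * (y - x) - iteratedDeriv 2 g x * (y - x) ^ 2 / 2|
          + |deriv g x * r|
          + |iteratedDeriv 2 g x / 2 * ((y - x - δ * S₁ x) * (y - x + δ * S₁ x))| := by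
            gcongr
            exact abs_add_le _ _
      _ ≤ (2 * M * δ) ^ 3 + ε' * δ ^ 2 + 1 / 2 * (M * δ ^ 2 * (3 * M * δ)) := by
            gcongr
      _ ≤ ε * δ ^ 2 := by
            have hM3 : (0:ℝ) < 20 * M ^ 3 := by positivity
            have hδε : δ * (20 * M ^ 3) < ε := (lt_div_iff₀ hM3).mp hδsmall
            have k1 : δ * (20 * M ^ 3) * δ ^ 2 ≤ ε * δ ^ 2 :=
              mul_le_mul_of_nonneg_right hδε.le hδsq.le
            have k2 : ε' * δ ^ 2 ≤ ε / 2 * δ ^ 2 :=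
              mul_le_mul_of_nonneg_right hε'leε hδsq.le
            have b1 : 8 * M ^ 3 + 3 / 2 * M ^ 2 ≤ 10 * M ^ 3 := by
              nlinarith [mul_nonneg (sq_nonneg M) (by linarith : (0:ℝ) ≤ M - 2)]
            have b3 : 10 * M ^ 3 * δ ^ 3 ≤ ε / 2 * δ ^ 2 := by
              have k1' : 20 * M ^ 3 * δ ^ 3 ≤ ε * δ ^ 2 := by
                calc 20 * M ^ 3 * δ ^ 3 = δ * (20 * M ^ 3) * δ ^ 2 := by ring
                  _ ≤ ε * δ ^ 2 := k1
              linarith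
            calc (2 * M * δ) ^ 3 + ε' * δ ^ 2 + 1 / 2 * (M * δ ^ 2 * (3 * M * δ))
                = (8 * M ^ 3 + 3 / 2 * M ^ 2) * δ ^ 3 + ε' * δ ^ 2 := by ring
              _ ≤ 10 * M ^ 3 * δ ^ 3 + ε / 2 * δ ^ 2 := by
                  refine add_le_add (mul_le_mul_of_nonneg_right b1 (by positivity)) k2
              _ ≤ ε / 2 * δ ^ 2 + ε / 2 * δ ^ 2 := add_le_add b3 le_rfl
              _ = ε * δ ^ 2 := by ring
  -- integrability facts
  have iE : IntervalIntegrable (fun x => f x * E x) volume 0 1 :=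
    hfInt.mul_continuousOn hEc.continuousOn
  have i1 : IntervalIntegrable (fun x => f x * (g (D δ x) - g x)) volume 0 1 :=
    hfInt.mul_continuousOn ((hgc.comp hDc).sub hgc).continuousOn
  have i2 : IntervalIntegrable (fun x => f x * S₁ x * deriv g x) volume 0 1 := by
    have := hfInt.mul_continuousOn (hS₁.continuous.mul hg'c).continuousOn
    simpa [mul_assoc] using this
  have i3 : IntervalIntegrable (fun x => f x * S₁ x ^ 2 * iteratedDeriv 2 g x) volume 0 1 := by
    have := hfInt.mul_continuousOn ((hS₁.continuous.pow 2).mul hg''c).continuousOn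
    simpa [mul_assoc] using this
  have i4 : IntervalIntegrable (fun x => f x * S₂ x * deriv g x) volume 0 1 := by
    have := hfInt.mul_continuousOn (hS₂.continuous.mul hg'c).continuousOn
    simpa [mul_assoc] using this
  -- combine the integrals
  have hW : (∫ x in (0:ℝ)..1, f x * (g (D δ x) - g x))
      - δ * (∫ x in (0:ℝ)..1, f x * S₁ x * deriv g x)
      - δ ^ 2 / 2 * (∫ x in (0:ℝ)..1, f x * S₁ x ^ 2 * iteratedDeriv 2 g x)
      - δ ^ 2 / 2 * (∫ x in (0:ℝ)..1, f x * S₂ x * deriv g x)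
      = ∫ x in (0:ℝ)..1, f x * E x := by
    rw [← intervalIntegral.integral_const_mul, ← intervalIntegral.integral_const_mul,
      ← intervalIntegral.integral_const_mul, ← intervalIntegral.integral_sub i1 (i2.const_mul δ),
      ← intervalIntegral.integral_sub (i1.sub (i2.const_mul δ)) (i3.const_mul _),
      ← intervalIntegral.integral_sub ((i1.sub (i2.const_mul δ)).sub (i3.const_mul _))
        (i4.const_mul _)]
    apply intervalIntegral.integral_congr
    intro x _
    simp only [hEdef]
    ring
  -- bound the integral of f * E
  have hInt_bound : |∫ x in (0:ℝ)..1, f x * E x| ≤ ε * δ ^ 2 := by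
    calc |∫ x in (0:ℝ)..1, f x * E x|
        ≤ ∫ x in (0:ℝ)..1, |f x * E x| :=
          intervalIntegral.abs_integral_le_integral_abs zero_le_one
      _ ≤ ∫ x in (0:ℝ)..1, |f x| * (ε * δ ^ 2) := by
          apply intervalIntegral.integral_mono_on zero_le_one iE.abs
            (hfInt.abs.mul_const _)
          intro x _
          rw [abs_mul]
          exact mul_le_mul_of_nonneg_left (hEbound x) (abs_nonneg _)
      _ = (∫ x in (0:ℝ)..1, |f x|) * (ε * δ ^ 2) := by
          rw [intervalIntegral.integral_mul_const]
      _ ≤ 1 * (ε * δ ^ 2) := by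
          apply mul_le_mul_of_nonneg_right hfL1 (by positivity)
      _ = ε * δ ^ 2 := one_mul _
  -- final algebra
  have hδne : δ ≠ 0 := ne_of_gt hδpos
  have heq : (δ ^ 2)⁻¹ * ((∫ x in (0:ℝ)..1, f x * (g (D δ x) - g x)) -
        δ * ∫ x in (0:ℝ)..1, f x * S₁ x * deriv g x) -
      (1 / 2) * ((∫ x in (0:ℝ)..1, f x * (S₁ x) ^ 2 * iteratedDeriv 2 g x) +
        ∫ x in (0:ℝ)..1, f x * S₂ x * deriv g x)
      = (δ ^ 2)⁻¹ * (∫ x in (0:ℝ)..1, f x * E x) := by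
    rw [← hW]
    field_simp
    ring
  rw [heq, abs_mul, abs_of_nonneg (by positivity : (0:ℝ) ≤ (δ ^ 2)⁻¹)]
  calc (δ ^ 2)⁻¹ * |∫ x in (0:ℝ)..1, f x * E x|
      ≤ (δ ^ 2)⁻¹ * (ε * δ ^ 2) :=
        mul_le_mul_of_nonneg_left hInt_bound (by positivity)
    _ = ε := by field_simp
end

section
/- Let T : S¹ → S¹ be a C^{k+1} expanding map (|T'| ≥ α^{-1} > 1) with transfer operator L. Then L satisfies a Lasota–Yorke inequality on W^{k,1}(S¹): there exist constants A_k, B_k ≥ 0 such that for all n and f, ‖L^n f‖_{W^{k−1,1}} ≤ A_k ‖f‖_{W^{k−1,1}} and ‖L^n f‖_{W^{k,1}} ≤ α^{kn} ‖f‖_{W^{k,1}} + B_k ‖f‖_{W^{k−1,1}}. -/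
open Real Filter Topology MeasureTheory intervalIntegral Set
open scoped Convolution

/-- The `W^{m,1}(S¹)` Sobolev norm `∑_{j ≤ m} ∫₀¹ |f⁽ʲ⁾|` (evaluated here on
smooth representatives), the circle being modeled by `1`-periodic functions. -/
noncomputable def sobNorm (m : ℕ) (f : ℝ → ℝ) : ℝ :=
  ∑ j ∈ Finset.range (m + 1), ∫ y in (0:ℝ)..1, |iteratedDeriv j f y|


-- periodic deriv
lemma periodic_deriv1 {f : ℝ → ℝ} (hf : Function.Periodic f 1) :
    Function.Periodic (deriv f) 1 := by
  intro x
  have h1 : (fun y => f (y + 1)) = f := funext fun y => hf y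
  calc deriv f (x + 1) = deriv (fun y => f (y + 1)) x := (deriv_comp_add_const ..).symm
    _ = deriv f x := by rw [h1]

lemma periodic_iteratedDeriv {f : ℝ → ℝ} (hf : Function.Periodic f 1) (n : ℕ) :
    Function.Periodic (iteratedDeriv n f) 1 := by
  induction n with
  | zero => simpa using hf
  | succ n ih => rw [iteratedDeriv_succ]; exact periodic_deriv1 ih

-- bounded periodic continuous
lemma periodic_bound {f : ℝ → ℝ} (hf : Function.Periodic f 1) (hc : Continuous f) :
    ∃ M : ℝ, 0 ≤ M ∧ ∀ x, |f x| ≤ M := by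
  obtain ⟨C, hC⟩ := isCompact_Icc.exists_bound_of_continuousOn (s := Icc (0:ℝ) 1) hc.continuousOn
  refine ⟨max C 0, le_max_right _ _, fun x => ?_⟩
  have h1 : f x = f (Int.fract x) := by
    have := hf.sub_int_mul_eq (x := x) (n := ⌊x⌋)
    rw [Int.fract]
    rw [← this]; norm_num
  rw [h1]
  have : Int.fract x ∈ Icc (0:ℝ) 1 :=
    ⟨Int.fract_nonneg x, (Int.fract_lt_one x).le⟩
  exact le_trans (by simpa using hC _ this) (le_max_left _ _)

-- integration by parts for periodic products
lemma ibp_periodic {u v : ℝ → ℝ} (hu : ContDiff ℝ 1 u) (hv : ContDiff ℝ 1 v)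
    (hper : Function.Periodic (fun x => u x * v x) 1) :
    (∫ x in (0:ℝ)..1, deriv u x * v x) = -∫ x in (0:ℝ)..1, u x * deriv v x := by
  have hu' : Continuous (deriv u) := hu.continuous_deriv le_rfl
  have hv' : Continuous (deriv v) := hv.continuous_deriv le_rfl
  have hud : Differentiable ℝ u := hu.differentiable one_ne_zero
  have hvd : Differentiable ℝ v := hv.differentiable one_ne_zero
  have key := integral_deriv_mul_eq_sub (u := u) (v := v) (u' := deriv u) (v' := deriv v)
    (fun x _ => (hud x).hasDerivAt) (fun x _ => (hvd x).hasDerivAt)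
    (hu'.intervalIntegrable 0 1) (hv'.intervalIntegrable 0 1)
  have hb : u 1 * v 1 - u 0 * v 0 = 0 := by
    have := hper 0
    simp only [zero_add] at this
    rw [this]; ring
  rw [hb] at key
  have hsplit : (∫ x in (0:ℝ)..1, deriv u x * v x + u x * deriv v x)
      = (∫ x in (0:ℝ)..1, deriv u x * v x) + ∫ x in (0:ℝ)..1, u x * deriv v x :=
    integral_add ((hu'.mul hvd.continuous).intervalIntegrable 0 1)
      ((hud.continuous.mul hv').intervalIntegrable 0 1)
  rw [hsplit] at key
  linarith

lemma contdiff_iteratedDeriv_top {g : ℝ → ℝ} (hg : ContDiff ℝ (⊤:ℕ∞) g) (m : ℕ) :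
    ContDiff ℝ (⊤:ℕ∞) (iteratedDeriv m g) := by
  rw [iteratedDeriv_eq_iterate]
  exact hg.iterate_deriv m

lemma shift_derivs (m : ℕ) (p g : ℝ → ℝ) (hp : ContDiff ℝ m p) (hpper : Function.Periodic p 1)
    (hg : ContDiff ℝ (⊤:ℕ∞) g) (hgper : Function.Periodic g 1) :
    (∫ x in (0:ℝ)..1, iteratedDeriv m p x * g x)
      = (-1:ℝ)^m * ∫ x in (0:ℝ)..1, p x * iteratedDeriv m g x := by
  induction m generalizing p with
  | zero => simp
  | succ m ih =>
    have hp' : ContDiff ℝ ((m:WithTop ℕ∞) + 1) p := by exact_mod_cast hp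
    have hdp : ContDiff ℝ m (deriv p) := (contDiff_succ_iff_deriv.mp hp').2.2
    have hdpper : Function.Periodic (deriv p) 1 := periodic_deriv1 hpper
    have h1 : (∫ x in (0:ℝ)..1, iteratedDeriv (m+1) p x * g x)
        = (-1:ℝ)^m * ∫ x in (0:ℝ)..1, deriv p x * iteratedDeriv m g x := by
      rw [iteratedDeriv_succ']
      exact ih (deriv p) hdp hdpper
    have hp1 : ContDiff ℝ 1 p := hp'.of_le (by exact_mod_cast Nat.one_le_iff_ne_zero.mpr (Nat.succ_ne_zero m))
    have hg1 : ContDiff ℝ 1 (iteratedDeriv m g) :=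
      (contdiff_iteratedDeriv_top hg m).of_le (by exact_mod_cast le_top)
    have h2 := ibp_periodic hp1 hg1 (hpper.mul (periodic_iteratedDeriv hgper m))
    rw [h1, h2]
    rw [show (∫ x in (0:ℝ)..1, p x * deriv (iteratedDeriv m g) x)
        = ∫ x in (0:ℝ)..1, p x * iteratedDeriv (m+1) g x by rw [iteratedDeriv_succ]]
    ring

lemma pointwise_sign_ineq (t ε : ℝ) (hε : 0 < ε) :
    |t| - ε ≤ t * (t / Real.sqrt (t^2 + ε^2)) := by
  have hpos : 0 < t^2 + ε^2 := by positivity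
  set a := Real.sqrt (t^2 + ε^2) with ha
  have ha0 : 0 < a := Real.sqrt_pos.mpr hpos
  have ha2 : a^2 = t^2 + ε^2 := Real.sq_sqrt hpos.le
  have hage : |t| ≤ a := by
    rw [ha, ← Real.sqrt_sq_eq_abs]
    exact Real.sqrt_le_sqrt (by nlinarith)
  have hale : a ≤ |t| + ε := by
    rw [ha]
    have : t^2 + ε^2 ≤ (|t| + ε)^2 := by nlinarith [abs_nonneg t, sq_abs t]
    calc Real.sqrt (t^2+ε^2) ≤ Real.sqrt ((|t|+ε)^2) := Real.sqrt_le_sqrt this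
      _ = |t| + ε := Real.sqrt_sq (by positivity)
  rw [show t * (t / a) = t^2 / a by ring]
  rw [le_div_iff₀ ha0]
  nlinarith [sq_abs t, abs_nonneg t]

/-- Mollification: if `∫ h g ≤ K` for all smooth periodic `|g| ≤ 1`, then `∫ |h| ≤ K`. -/
lemma l1_dual_bound (h : ℝ → ℝ) (hc : Continuous h) (hper : Function.Periodic h 1) (K : ℝ)
    (hK : ∀ g : ℝ → ℝ, ContDiff ℝ (⊤:ℕ∞) g → Function.Periodic g 1 → (∀ x, |g x| ≤ 1) →
      (∫ x in (0:ℝ)..1, h x * g x) ≤ K) :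
    (∫ x in (0:ℝ)..1, |h x|) ≤ K := by
  refine le_of_forall_pos_le_add (fun ε hε => ?_)
  -- the continuous approximate sign function
  set s : ℝ → ℝ := fun x => h x / Real.sqrt (h x ^ 2 + ε ^ 2) with hs
  have hden : ∀ x, 0 < Real.sqrt (h x ^ 2 + ε ^ 2) := fun x =>
    Real.sqrt_pos.mpr (by positivity)
  have hsc : Continuous s := by
    apply hc.div (by fun_prop)
    exact fun x => (hden x).ne'
  have hsper : Function.Periodic s 1 := fun x => by simp only [hs, hper x]
  have hsbd : ∀ x, |s x| ≤ 1 := by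
    intro x
    rw [hs, abs_div, abs_of_pos (hden x), div_le_one (hden x)]
    rw [← Real.sqrt_sq_eq_abs]
    exact Real.sqrt_le_sqrt (by nlinarith [sq_nonneg (h x)])
  -- bump family
  have hr1 : ∀ n : ℕ, (0:ℝ) < 1/(n+2) := fun n => by positivity
  have hr2 : ∀ n : ℕ, (1:ℝ)/(n+2) < 2/(n+2) := fun n => by
    have h2 : (0:ℝ) < (n:ℝ)+2 := by positivity
    rw [div_lt_div_iff₀ h2 h2]; nlinarith
  set φ : ℕ → ContDiffBump (0:ℝ) := fun n => ⟨1/(n+2), 2/(n+2), hr1 n, hr2 n⟩ with hφ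
  have hφr : Tendsto (fun n => (φ n).rOut) atTop (𝓝 0) := by
    simp only [hφ]
    have : Tendsto (fun n : ℕ => ((n:ℝ)+2)) atTop atTop :=
      tendsto_atTop_add_const_right _ _ tendsto_natCast_atTop_atTop
    simpa [div_eq_mul_inv] using this.inv_tendsto_atTop.const_mul (2:ℝ)
  set g : ℕ → ℝ → ℝ := fun n => (φ n).normed volume ⋆[ContinuousLinearMap.lsmul ℝ ℝ] s with hg
  have hgsmooth : ∀ n, ContDiff ℝ (⊤:ℕ∞) (g n) := fun n =>
    ((φ n).hasCompactSupport_normed).contDiff_convolution_left _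
      ((φ n).contDiff_normed) (hsc.locallyIntegrable)
  have hgbd : ∀ n x, |g n x| ≤ 1 := by
    intro n x
    show |((φ n).normed volume ⋆[ContinuousLinearMap.lsmul ℝ ℝ, volume] s) x| ≤ 1
    rw [convolution_def]
    calc |∫ t, ContinuousLinearMap.lsmul ℝ ℝ ((φ n).normed volume t) (s (x - t))|
        ≤ ∫ t, (φ n).normed volume t := by
          rw [← Real.norm_eq_abs]
          apply MeasureTheory.norm_integral_le_of_norm_le ((φ n).integrable_normed)
          filter_upwards with t
          simp only [ContinuousLinearMap.lsmul_apply, smul_eq_mul, norm_mul, Real.norm_eq_abs,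
            abs_of_nonneg ((φ n).nonneg_normed t)]
          calc (φ n).normed volume t * |s (x - t)| ≤ (φ n).normed volume t * 1 :=
                mul_le_mul_of_nonneg_left (hsbd _) ((φ n).nonneg_normed t)
            _ = (φ n).normed volume t := mul_one _
      _ = 1 := (φ n).integral_normed
  have hgper : ∀ n, Function.Periodic (g n) 1 := by
    intro n x
    show ((φ n).normed volume ⋆[ContinuousLinearMap.lsmul ℝ ℝ, volume] s) (x+1)
      = ((φ n).normed volume ⋆[ContinuousLinearMap.lsmul ℝ ℝ, volume] s) x
    simp only [convolution_def]
    congr 1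
    ext t
    congr 1
    rw [show x + 1 - t = (x - t) + 1 by ring, hsper]
  have hgtend : ∀ x, Tendsto (fun n => g n x) atTop (𝓝 (s x)) := fun x =>
    ContDiffBump.convolution_tendsto_right_of_continuous hφr hsc x
  -- pass to the limit in the integral inequality
  have hlim : Tendsto (fun n => ∫ x in (0:ℝ)..1, h x * g n x) atTop
      (𝓝 (∫ x in (0:ℝ)..1, h x * s x)) := by
    apply intervalIntegral.tendsto_integral_filter_of_dominated_convergence (fun x => |h x|)
    · filter_upwards with n
      exact (hc.mul (hgsmooth n).continuous).aestronglyMeasurable.restrict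
    · filter_upwards with n
      filter_upwards with x _
      rw [Real.norm_eq_abs, abs_mul]
      calc |h x| * |g n x| ≤ |h x| * 1 := mul_le_mul_of_nonneg_left (hgbd n x) (abs_nonneg _)
        _ = |h x| := mul_one _
    · exact hc.abs.intervalIntegrable 0 1
    · filter_upwards with x _
      exact (tendsto_const_nhds.mul (hgtend x))
  have hle : (∫ x in (0:ℝ)..1, h x * s x) ≤ K :=
    le_of_tendsto hlim (Filter.Eventually.of_forall fun n =>
      hK (g n) (hgsmooth n) (hgper n) (hgbd n))
  -- lower bound ∫ h s ≥ ∫ |h| - ε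
  have hlow : (∫ x in (0:ℝ)..1, |h x|) - ε ≤ ∫ x in (0:ℝ)..1, h x * s x := by
    have hmono : (∫ x in (0:ℝ)..1, (|h x| - ε)) ≤ ∫ x in (0:ℝ)..1, h x * s x := by
      apply intervalIntegral.integral_mono_on (by norm_num)
      · exact ((hc.abs.sub continuous_const).intervalIntegrable 0 1)
      · exact ((hc.mul hsc).intervalIntegrable 0 1)
      · intro x _
        exact pointwise_sign_ineq (h x) ε hε
    have : (∫ x in (0:ℝ)..1, (|h x| - ε)) = (∫ x in (0:ℝ)..1, |h x|) - ε := by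
      rw [intervalIntegral.integral_sub (hc.abs.intervalIntegrable 0 1)
        (intervalIntegrable_const)]
      simp
    linarith
  linarith

/-- The "weighted derivative" operator `h ↦ (h / T')'`. -/
noncomputable def Pop (T : ℝ → ℝ) : (ℝ → ℝ) → (ℝ → ℝ) :=
  fun h => deriv (fun x => h x * (deriv T x)⁻¹)

lemma Pop_smooth {k : ℕ} {T : ℝ → ℝ} (hu : ContDiff ℝ k (fun x => (deriv T x)⁻¹))
    {m : ℕ} (hmk : m + 1 ≤ k) {h : ℝ → ℝ} (hh : ContDiff ℝ (m+1) h) :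
    ContDiff ℝ m (Pop T h) := by
  have hu' : ContDiff ℝ (m+1) (fun x => (deriv T x)⁻¹) :=
    hu.of_le (by exact_mod_cast hmk)
  have hprod : ContDiff ℝ ((m:WithTop ℕ∞)+1) (fun x => h x * (deriv T x)⁻¹) := by
    exact_mod_cast hh.mul hu'
  exact (contDiff_succ_iff_deriv.mp hprod).2.2

lemma Pop_periodic {T : ℝ → ℝ} (hT' : Function.Periodic (deriv T) 1)
    {h : ℝ → ℝ} (hh : Function.Periodic h 1) : Function.Periodic (Pop T h) 1 := by
  apply periodic_deriv1
  intro x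
  simp only [hT' x, hh x]

lemma Pop_iter_smooth {k : ℕ} {T : ℝ → ℝ} (hu : ContDiff ℝ k (fun x => (deriv T x)⁻¹))
    (i : ℕ) : ∀ (m : ℕ), i + m ≤ k → ∀ {h : ℝ → ℝ}, ContDiff ℝ (i+m) h →
    ContDiff ℝ m ((Pop T)^[i] h) := by
  induction i with
  | zero => intro m _ h hh; simpa using hh
  | succ i ih =>
    intro m hm h hh
    rw [Function.iterate_succ_apply]
    exact ih m (by omega) (Pop_smooth hu (show i + m + 1 ≤ k by omega)
      (hh.of_le (by exact_mod_cast (by omega : i + m + 1 ≤ i + 1 + m))))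

lemma Pop_iter_periodic {T : ℝ → ℝ} (hT' : Function.Periodic (deriv T) 1)
    (i : ℕ) {h : ℝ → ℝ} (hh : Function.Periodic h 1) :
    Function.Periodic ((Pop T)^[i] h) 1 := by
  induction i generalizing h with
  | zero => simpa using hh
  | succ i ih =>
    rw [Function.iterate_succ_apply]
    exact ih (Pop_periodic hT' hh)

lemma subst_ibp {T : ℝ → ℝ} (hTd : Differentiable ℝ T) (hT'c : Continuous (deriv T))
    (hne : ∀ x, deriv T x ≠ 0) (hu1 : ContDiff ℝ 1 (fun x => (deriv T x)⁻¹))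
    (hT'per : Function.Periodic (deriv T) 1) {d : ℤ} (hTlift : ∀ x : ℝ, T (x + 1) = T x + (d:ℝ))
    {h : ℝ → ℝ} (hh : ContDiff ℝ 1 h) (hhper : Function.Periodic h 1)
    {g : ℝ → ℝ} (hg : ContDiff ℝ (⊤:ℕ∞) g) (hgper : Function.Periodic g 1) (m : ℕ) :
    (∫ x in (0:ℝ)..1, h x * iteratedDeriv (m+1) g (T x))
      = -∫ x in (0:ℝ)..1, Pop T h x * iteratedDeriv m g (T x) := by
  set w : ℝ → ℝ := fun x => h x * (deriv T x)⁻¹ with hw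
  set v : ℝ → ℝ := fun x => iteratedDeriv m g (T x) with hv
  have hwc : ContDiff ℝ 1 w := hh.mul hu1
  have hwd : ∀ x, HasDerivAt w (deriv w x) x :=
    fun x => (hwc.differentiable one_ne_zero x).hasDerivAt
  have hgm : ∀ y, HasDerivAt (iteratedDeriv m g) (iteratedDeriv (m+1) g y) y := by
    intro y
    rw [iteratedDeriv_succ]
    exact ((contdiff_iteratedDeriv_top hg m).differentiable (by simp) y).hasDerivAt
  have hvd : ∀ x, HasDerivAt v (iteratedDeriv (m+1) g (T x) * deriv T x) x :=
    fun x => (hgm (T x)).comp x (hTd x).hasDerivAt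
  have hw'c : Continuous (deriv w) := hwc.continuous_deriv le_rfl
  have hv'c : Continuous (fun x => iteratedDeriv (m+1) g (T x) * deriv T x) :=
    (((contdiff_iteratedDeriv_top hg (m+1)).continuous).comp hTd.continuous).mul hT'c
  have hvc : Continuous v := ((contdiff_iteratedDeriv_top hg m).continuous).comp hTd.continuous
  have key := integral_deriv_mul_eq_sub (u := w) (v := v) (u' := deriv w)
    (v' := fun x => iteratedDeriv (m+1) g (T x) * deriv T x)
    (fun x _ => hwd x) (fun x _ => hvd x)
    (hw'c.intervalIntegrable 0 1) (hv'c.intervalIntegrable 0 1)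
  have huper : Function.Periodic (fun x => (deriv T x)⁻¹) 1 := fun x => by simp [hT'per x]
  have hvper : Function.Periodic v 1 := by
    intro x
    show iteratedDeriv m g (T (x+1)) = iteratedDeriv m g (T x)
    rw [hTlift]
    simpa using ((periodic_iteratedDeriv hgper m).int_mul d) (T x)
  have hwper : Function.Periodic w 1 := hhper.mul huper
  have hb : w 1 * v 1 - w 0 * v 0 = 0 := by
    have h1 := hwper 0
    have h2 := hvper 0
    simp only [zero_add] at h1 h2
    rw [h1, h2]; ring
  rw [hb] at key
  have hsplit : (∫ x in (0:ℝ)..1,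
        deriv w x * v x + w x * (iteratedDeriv (m+1) g (T x) * deriv T x))
      = (∫ x in (0:ℝ)..1, deriv w x * v x)
        + ∫ x in (0:ℝ)..1, w x * (iteratedDeriv (m+1) g (T x) * deriv T x) :=
    integral_add ((hw'c.mul hvc).intervalIntegrable 0 1)
      ((hwc.continuous.mul hv'c).intervalIntegrable 0 1)
  rw [hsplit] at key
  have hcongr : (∫ x in (0:ℝ)..1, h x * iteratedDeriv (m+1) g (T x))
      = ∫ x in (0:ℝ)..1, w x * (iteratedDeriv (m+1) g (T x) * deriv T x) := by
    apply intervalIntegral.integral_congr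
    intro x _
    show h x * iteratedDeriv (m+1) g (T x)
      = h x * (deriv T x)⁻¹ * (iteratedDeriv (m+1) g (T x) * deriv T x)
    rw [mul_assoc, mul_comm (iteratedDeriv (m+1) g (T x)) (deriv T x), ← mul_assoc (deriv T x)⁻¹,
      inv_mul_cancel₀ (hne x), one_mul]
  have hPop : (∫ x in (0:ℝ)..1, Pop T h x * iteratedDeriv m g (T x))
      = ∫ x in (0:ℝ)..1, deriv w x * v x := by rfl
  rw [hcongr, hPop]
  linarith

lemma transfer_deriv_norm_le (k : ℕ) {T : ℝ → ℝ} {d : ℤ}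
    (hTd : Differentiable ℝ T) (hT'c : Continuous (deriv T)) (hne : ∀ x, deriv T x ≠ 0)
    (hu : ContDiff ℝ k (fun x => (deriv T x)⁻¹)) (hT'per : Function.Periodic (deriv T) 1)
    (hTlift : ∀ x : ℝ, T (x + 1) = T x + (d:ℝ)) (hk1 : 1 ≤ k)
    {f F : ℝ → ℝ} (hf : ContDiff ℝ k f) (hfper : Function.Periodic f 1)
    (hF : ContDiff ℝ k F) (hFper : Function.Periodic F 1)
    (hdual : ∀ g, Continuous g → Function.Periodic g 1 →
      (∫ x in (0:ℝ)..1, F x * g x) = ∫ x in (0:ℝ)..1, f x * g (T x))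
    (j : ℕ) (hj : j ≤ k) :
    (∫ x in (0:ℝ)..1, |iteratedDeriv j F x|) ≤ ∫ x in (0:ℝ)..1, |(Pop T)^[j] f x| := by
  have hu1 : ContDiff ℝ 1 (fun x => (deriv T x)⁻¹) :=
    hu.of_le (by exact_mod_cast hk1)
  have hPjf_cont : Continuous ((Pop T)^[j] f) :=
    (Pop_iter_smooth hu j 0 (by omega) (hf.of_le (by exact_mod_cast (by omega : j + 0 ≤ k)))).continuous
  apply l1_dual_bound (iteratedDeriv j F)
    (hF.continuous_iteratedDeriv j (by exact_mod_cast hj)) (periodic_iteratedDeriv hFper j)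
  intro g hg hgper hgbd
  -- Step 1: move derivatives onto g
  have step1 : (∫ x in (0:ℝ)..1, iteratedDeriv j F x * g x)
      = (-1:ℝ)^j * ∫ x in (0:ℝ)..1, F x * iteratedDeriv j g x :=
    shift_derivs j F g (hF.of_le (by exact_mod_cast hj)) hFper hg hgper
  -- Step 2: duality
  have step2 : (∫ x in (0:ℝ)..1, F x * iteratedDeriv j g x)
      = ∫ x in (0:ℝ)..1, f x * iteratedDeriv j g (T x) :=
    hdual (iteratedDeriv j g) (contdiff_iteratedDeriv_top hg j).continuous
      (periodic_iteratedDeriv hgper j)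
  -- Step 3: move derivatives back through Pop
  have step3 : ∀ i, i ≤ j → (∫ x in (0:ℝ)..1, f x * iteratedDeriv j g (T x))
      = (-1:ℝ)^i * ∫ x in (0:ℝ)..1, (Pop T)^[i] f x * iteratedDeriv (j-i) g (T x) := by
    intro i hi
    induction i with
    | zero => simp
    | succ i ih =>
      rw [ih (by omega)]
      have hsub : j - i = (j - (i+1)) + 1 := by omega
      have hPif : ContDiff ℝ 1 ((Pop T)^[i] f) :=
        Pop_iter_smooth hu i 1 (by omega) (hf.of_le (by exact_mod_cast (by omega : i + 1 ≤ k)))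
      have hPifper : Function.Periodic ((Pop T)^[i] f) 1 := Pop_iter_periodic hT'per i hfper
      rw [hsub]
      rw [subst_ibp hTd hT'c hne hu1 hT'per hTlift hPif hPifper hg hgper (j - (i+1))]
      rw [← Function.iterate_succ_apply' (Pop T) i f]
      rw [pow_succ]
      ring
  have step4 := step3 j le_rfl
  simp only [Nat.sub_self, iteratedDeriv_zero] at step4
  rw [step1, step2, step4, ← mul_assoc, ← pow_add]
  rw [Even.neg_one_pow ⟨j, rfl⟩, one_mul]
  -- Step 5: final bound
  apply intervalIntegral.integral_mono_on (by norm_num)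
  · exact (hPjf_cont.mul ((hg.continuous).comp hTd.continuous)).intervalIntegrable 0 1
  · exact hPjf_cont.abs.intervalIntegrable 0 1
  · intro x _
    calc (Pop T)^[j] f x * g (T x) ≤ |(Pop T)^[j] f x * g (T x)| := le_abs_self _
      _ = |(Pop T)^[j] f x| * |g (T x)| := abs_mul _ _
      _ ≤ |(Pop T)^[j] f x| * 1 := mul_le_mul_of_nonneg_left (hgbd _) (abs_nonneg _)
      _ = |(Pop T)^[j] f x| := mul_one _

lemma leibniz_pointwise {f w : ℝ → ℝ} {m : ℕ} (hf : ContDiff ℝ m f) (hw : ContDiff ℝ m w)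
    {α U : ℝ} (hU0 : 0 ≤ U) (x : ℝ) (hwx : |w x| ≤ α)
    (hUx : ∀ r, r ≤ m → |iteratedDeriv r w x| ≤ U) :
    |iteratedDeriv m (fun y => f y * w y) x| ≤ α * |iteratedDeriv m f x|
      + (2^m * U) * ∑ i ∈ Finset.range m, |iteratedDeriv i f x| := by
  have habs : ∀ (g : ℝ → ℝ) (r : ℕ) (y : ℝ), ‖iteratedFDeriv ℝ r g y‖ = |iteratedDeriv r g y| :=
    fun g r y => by rw [norm_iteratedFDeriv_eq_norm_iteratedDeriv, Real.norm_eq_abs]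
  have key := norm_iteratedFDeriv_mul_le (𝕜 := ℝ) (N := ((m:ℕ∞) : WithTop ℕ∞)) hf hw x
    (le_refl _)
  rw [habs] at key
  simp only [habs] at key
  have hsplit : ∑ i ∈ Finset.range (m + 1),
        (m.choose i : ℝ) * |iteratedDeriv i f x| * |iteratedDeriv (m - i) w x|
      = (∑ i ∈ Finset.range m,
          (m.choose i : ℝ) * |iteratedDeriv i f x| * |iteratedDeriv (m - i) w x|)
        + (m.choose m : ℝ) * |iteratedDeriv m f x| * |iteratedDeriv (m - m) w x| :=
    Finset.sum_range_succ _ m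
  rw [hsplit] at key
  have htop : (m.choose m : ℝ) * |iteratedDeriv m f x| * |iteratedDeriv (m - m) w x|
      ≤ α * |iteratedDeriv m f x| := by
    simp only [Nat.choose_self, Nat.cast_one, one_mul, Nat.sub_self, iteratedDeriv_zero]
    calc |iteratedDeriv m f x| * |w x| ≤ |iteratedDeriv m f x| * α :=
          mul_le_mul_of_nonneg_left hwx (abs_nonneg _)
      _ = α * |iteratedDeriv m f x| := mul_comm _ _
  have hrest : (∑ i ∈ Finset.range m,
        (m.choose i : ℝ) * |iteratedDeriv i f x| * |iteratedDeriv (m - i) w x|)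
      ≤ (2^m * U) * ∑ i ∈ Finset.range m, |iteratedDeriv i f x| := by
    rw [Finset.mul_sum]
    apply Finset.sum_le_sum
    intro i hi
    have hchoose : (m.choose i : ℝ) ≤ 2^m := by
      have h1 : m.choose i ≤ 2^m := by
        calc m.choose i ≤ ∑ r ∈ Finset.range (m+1), m.choose r :=
              Finset.single_le_sum (fun _ _ => Nat.zero_le _)
                (Finset.mem_range.mpr (by have := Finset.mem_range.mp hi; omega))
          _ = 2^m := Nat.sum_range_choose m
      exact_mod_cast h1
    calc (m.choose i : ℝ) * |iteratedDeriv i f x| * |iteratedDeriv (m - i) w x|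
        ≤ (2^m : ℝ) * |iteratedDeriv i f x| * U := by
          apply mul_le_mul
          · exact mul_le_mul_of_nonneg_right hchoose (abs_nonneg _)
          · exact hUx _ (Nat.sub_le m i)
          · exact abs_nonneg _
          · positivity
      _ = 2^m * U * |iteratedDeriv i f x| := by ring
  calc |iteratedDeriv m (fun y => f y * w y) x|
      ≤ _ := key
    _ ≤ (2^m * U) * (∑ i ∈ Finset.range m, |iteratedDeriv i f x|) + α * |iteratedDeriv m f x| :=
        add_le_add hrest htop
    _ = _ := by ring

lemma deriv_bounds_exist {w : ℝ → ℝ} {k : ℕ} (hw : ContDiff ℝ k w)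
    (hwper : Function.Periodic w 1) :
    ∃ U : ℝ, 0 ≤ U ∧ ∀ r, r ≤ k → ∀ x, |iteratedDeriv r w x| ≤ U := by
  have H : ∀ r : ℕ, ∃ M : ℝ, 0 ≤ M ∧ ∀ x, r ≤ k → |iteratedDeriv r w x| ≤ M := by
    intro r
    by_cases h : r ≤ k
    · obtain ⟨M, hM0, hM⟩ := periodic_bound (periodic_iteratedDeriv hwper r)
        (hw.continuous_iteratedDeriv r (by exact_mod_cast h))
      exact ⟨M, hM0, fun x _ => hM x⟩
    · exact ⟨0, le_rfl, fun x hr => absurd hr h⟩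
  choose M hM0 hM using H
  refine ⟨∑ r ∈ Finset.range (k+1), M r, Finset.sum_nonneg (fun r _ => hM0 r), ?_⟩
  intro r hr x
  calc |iteratedDeriv r w x| ≤ M r := hM r x hr
    _ ≤ ∑ r ∈ Finset.range (k+1), M r :=
        Finset.single_le_sum (fun i _ => hM0 i) (Finset.mem_range.mpr (by omega))

lemma integral_abs_nonneg (f : ℝ → ℝ) : 0 ≤ ∫ x in (0:ℝ)..1, |f x| :=
  intervalIntegral.integral_nonneg (by norm_num) (fun x _ => abs_nonneg _)

/-- Integrated Leibniz bound: `∫ |(f·w)⁽ᵐ⁾| ≤ α ∫|f⁽ᵐ⁾| + D Σ_{i<m} ∫|f⁽ⁱ⁾|`. -/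
lemma integral_leibniz_bound {f w : ℝ → ℝ} {m : ℕ} (hf : ContDiff ℝ m f) (hw : ContDiff ℝ m w)
    {α U : ℝ} (hα0 : 0 ≤ α) (hU0 : 0 ≤ U) (hwbd : ∀ x, |w x| ≤ α)
    (hU : ∀ r, r ≤ m → ∀ x, |iteratedDeriv r w x| ≤ U) :
    (∫ x in (0:ℝ)..1, |iteratedDeriv m (fun y => f y * w y) x|)
      ≤ α * (∫ x in (0:ℝ)..1, |iteratedDeriv m f x|)
        + (2^m * U) * ∑ i ∈ Finset.range m, ∫ x in (0:ℝ)..1, |iteratedDeriv i f x| := by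
  have hcont : ∀ (g : ℝ → ℝ), ContDiff ℝ m g → ∀ i, i ≤ m → Continuous (iteratedDeriv i g) :=
    fun g hg i hi => hg.continuous_iteratedDeriv i (by exact_mod_cast hi)
  have hfw : ContDiff ℝ m (fun y => f y * w y) := hf.mul hw
  have step1 : (∫ x in (0:ℝ)..1, |iteratedDeriv m (fun y => f y * w y) x|)
      ≤ ∫ x in (0:ℝ)..1,
          (α * |iteratedDeriv m f x| + (2^m * U) * ∑ i ∈ Finset.range m, |iteratedDeriv i f x|) := by
    apply intervalIntegral.integral_mono_on (by norm_num)
    · exact (hcont _ hfw m le_rfl).abs.intervalIntegrable 0 1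
    · apply Continuous.intervalIntegrable
      apply Continuous.add
      · exact continuous_const.mul (hcont _ hf m le_rfl).abs
      · exact continuous_const.mul (continuous_finset_sum _
          (fun i hi => (hcont _ hf i (by have := Finset.mem_range.mp hi; omega)).abs))
    · intro x _
      exact leibniz_pointwise hf hw hU0 x (hwbd x) (fun r hr => hU r hr x)
  have step2 : (∫ x in (0:ℝ)..1,
        (α * |iteratedDeriv m f x| + (2^m * U) * ∑ i ∈ Finset.range m, |iteratedDeriv i f x|))
      = α * (∫ x in (0:ℝ)..1, |iteratedDeriv m f x|)
        + (2^m * U) * ∑ i ∈ Finset.range m, ∫ x in (0:ℝ)..1, |iteratedDeriv i f x| := by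
    rw [intervalIntegral.integral_add]
    · congr 1
      · exact intervalIntegral.integral_const_mul _ _
      · rw [intervalIntegral.integral_const_mul]
        congr 1
        rw [intervalIntegral.integral_finset_sum]
        intro i hi
        exact (hcont _ hf i (by have := Finset.mem_range.mp hi; omega)).abs.intervalIntegrable 0 1
    · exact (continuous_const.mul (hcont _ hf m le_rfl).abs).intervalIntegrable 0 1
    · exact (continuous_const.mul (continuous_finset_sum _
        (fun i hi => (hcont _ hf i (by have := Finset.mem_range.mp hi; omega)).abs))).intervalIntegrable 0 1
  rw [step2] at step1
  exact step1

lemma pop_iter_bound {k : ℕ} {T : ℝ → ℝ} {α U : ℝ} (hα0 : 0 ≤ α) (hU0 : 0 ≤ U)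
    (hu : ContDiff ℝ k (fun x => (deriv T x)⁻¹))
    (huα : ∀ x, |(deriv T x)⁻¹| ≤ α)
    (hU : ∀ r, r ≤ k → ∀ x, |iteratedDeriv r (fun x => (deriv T x)⁻¹) x| ≤ U) :
    ∀ j, j ≤ k → ∃ C : ℝ, 0 ≤ C ∧ ∀ f : ℝ → ℝ, ContDiff ℝ j f →
      (∫ x in (0:ℝ)..1, |(Pop T)^[j] f x|)
        ≤ α^j * (∫ x in (0:ℝ)..1, |iteratedDeriv j f x|)
          + C * ∑ i ∈ Finset.range j, ∫ x in (0:ℝ)..1, |iteratedDeriv i f x| := by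
  intro j
  induction j with
  | zero =>
    intro _
    exact ⟨0, le_rfl, fun f _ => by simp⟩
  | succ j ih =>
    intro hjk
    obtain ⟨C, hC0, hC⟩ := ih (by omega)
    set w : ℝ → ℝ := fun x => (deriv T x)⁻¹ with hwdef
    set D : ℝ := 2^(j+1) * U with hD
    have hD0 : 0 ≤ D := by positivity
    refine ⟨α^j * D + C * (j * (α + D)), by positivity, ?_⟩
    intro f hf
    have hw : ContDiff ℝ (j+1) w := hu.of_le (by exact_mod_cast hjk)
    have hfw : ContDiff ℝ (j+1) (fun y => f y * w y) := hf.mul hw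
    have hPf : ContDiff ℝ j (Pop T f) := Pop_smooth hu hjk hf
    have hiter : (Pop T)^[j+1] f = (Pop T)^[j] (Pop T f) := Function.iterate_succ_apply _ _ _
    -- identification of derivatives of `Pop T f` with higher derivatives of `f * w`
    have hid : ∀ i : ℕ, iteratedDeriv i (Pop T f) = iteratedDeriv (i+1) (fun y => f y * w y) := by
      intro i
      rw [iteratedDeriv_succ']
      rfl
    -- the set S
    set S : ℝ := ∑ i ∈ Finset.range (j+1+1-1), ∫ x in (0:ℝ)..1, |iteratedDeriv i f x| with hS
    have hScongr : S = ∑ i ∈ Finset.range (j+1), ∫ x in (0:ℝ)..1, |iteratedDeriv i f x| := by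
      rw [hS]; norm_num
    have hS0 : 0 ≤ S := by
      rw [hScongr]; exact Finset.sum_nonneg (fun i _ => integral_abs_nonneg _)
    have hmem : ∀ m, m ≤ j → (∫ x in (0:ℝ)..1, |iteratedDeriv m f x|) ≤ S := by
      intro m hm
      rw [hScongr]
      apply Finset.single_le_sum (f := fun i => ∫ x in (0:ℝ)..1, |iteratedDeriv i f x|)
        (fun i _ => integral_abs_nonneg _)
      exact Finset.mem_range.mpr (by omega)
    -- Leibniz bound for each order m ≤ j+1
    have hLB : ∀ m, m ≤ j + 1 → (∫ x in (0:ℝ)..1, |iteratedDeriv m (fun y => f y * w y) x|)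
        ≤ α * (∫ x in (0:ℝ)..1, |iteratedDeriv m f x|) + D * S := by
      intro m hm
      have h1 := integral_leibniz_bound (hf.of_le (by exact_mod_cast hm))
        (hw.of_le (by exact_mod_cast hm)) hα0 hU0 huα
        (fun r hr x => hU r (le_trans hr (le_trans hm hjk)) x)
      refine h1.trans ?_
      apply add_le_add_right
      apply mul_le_mul
      · rw [hD]
        exact mul_le_mul_of_nonneg_right (pow_le_pow_right₀ (by norm_num) hm) hU0
      · rw [hScongr]
        apply Finset.sum_le_sum_of_subset_of_nonneg
        · exact Finset.range_subset_range.mpr hm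
        · intro i _ _; exact integral_abs_nonneg _
      · exact Finset.sum_nonneg (fun i _ => integral_abs_nonneg _)
      · exact hD0
    set X : ℝ := ∫ x in (0:ℝ)..1, |iteratedDeriv (j+1) f x| with hX
    have htop := hLB (j+1) le_rfl
    rw [← hid j] at htop
    have hlow : (∑ i ∈ Finset.range j, ∫ x in (0:ℝ)..1, |iteratedDeriv i (Pop T f) x|)
        ≤ j * ((α + D) * S) := by
      calc ∑ i ∈ Finset.range j, ∫ x in (0:ℝ)..1, |iteratedDeriv i (Pop T f) x|
          ≤ ∑ _i ∈ Finset.range j, (α + D) * S := by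
            apply Finset.sum_le_sum
            intro i hi
            have hij : i + 1 ≤ j := by have := Finset.mem_range.mp hi; omega
            rw [hid i]
            refine (hLB (i+1) (by omega)).trans ?_
            have h2 := hmem (i+1) hij
            nlinarith
        _ = j * ((α + D) * S) := by
            rw [Finset.sum_const, Finset.card_range, nsmul_eq_mul]
    rw [hiter]
    calc (∫ x in (0:ℝ)..1, |(Pop T)^[j] (Pop T f) x|)
        ≤ α^j * (∫ x in (0:ℝ)..1, |iteratedDeriv j (Pop T f) x|)
          + C * ∑ i ∈ Finset.range j, ∫ x in (0:ℝ)..1, |iteratedDeriv i (Pop T f) x| :=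
          hC _ hPf
      _ ≤ α^j * (α * X + D * S) + C * (j * ((α + D) * S)) := by
          apply add_le_add
          · exact mul_le_mul_of_nonneg_left htop (by positivity)
          · exact mul_le_mul_of_nonneg_left hlow hC0
      _ = α^(j+1) * X + (α^j * D + C * (j * (α + D))) * S := by ring
      _ = α^(j+1) * (∫ x in (0:ℝ)..1, |iteratedDeriv (j+1) f x|)
          + (α^j * D + C * (j * (α + D)))
            * ∑ i ∈ Finset.range (j+1), ∫ x in (0:ℝ)..1, |iteratedDeriv i f x| := by
          rw [hScongr, hX]

lemma sobNorm_def (m : ℕ) (f : ℝ → ℝ) : sobNorm m f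
    = ∑ j ∈ Finset.range (m + 1), ∫ y in (0:ℝ)..1, |iteratedDeriv j f y| := rfl

lemma sobNorm_succ (m : ℕ) (f : ℝ → ℝ) :
    sobNorm (m+1) f = sobNorm m f + ∫ y in (0:ℝ)..1, |iteratedDeriv (m+1) f y| :=
  Finset.sum_range_succ _ _

lemma sobNorm_nonneg (m : ℕ) (f : ℝ → ℝ) : 0 ≤ sobNorm m f :=
  Finset.sum_nonneg (fun i _ => integral_abs_nonneg _)

lemma term_le_sobNorm {j m : ℕ} (h : j ≤ m) (f : ℝ → ℝ) :
    (∫ y in (0:ℝ)..1, |iteratedDeriv j f y|) ≤ sobNorm m f := by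
  apply Finset.single_le_sum (f := fun i => ∫ y in (0:ℝ)..1, |iteratedDeriv i f y|)
    (fun i _ => integral_abs_nonneg _)
  exact Finset.mem_range.mpr (by omega)

lemma sobNorm_mono {m m' : ℕ} (h : m ≤ m') (f : ℝ → ℝ) : sobNorm m f ≤ sobNorm m' f := by
  apply Finset.sum_le_sum_of_subset_of_nonneg
  · exact Finset.range_subset_range.mpr (by omega)
  · intro i _ _; exact integral_abs_nonneg _

/-- **Lasota–Yorke inequality for expanding circle maps on `W^{k,1}(S¹)`**
(Lemma `Lemsu`).  The `C^{k+1}` expanding map `T` is given by a lift of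
integer degree `d` with `|T'| ≥ α⁻¹ > 1`; its transfer operator `L` is
characterized by duality, `∫ (Lf) g = ∫ f (g∘T)`, and preserves `C^k`
periodic functions. -/
theorem expanding_LasotaYorke
    (k : ℕ) (hk : 1 ≤ k)
    (T : ℝ → ℝ) (d : ℤ)
    (hT : ContDiff ℝ (k + 1) T)
    (hTlift : ∀ x : ℝ, T (x + 1) = T x + (d : ℝ))
    (α : ℝ) (hα0 : 0 < α) (hα1 : α < 1)
    (hTexp : ∀ x : ℝ, α⁻¹ ≤ |deriv T x|)
    (L : (ℝ → ℝ) → (ℝ → ℝ))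
    (hL_smooth : ∀ f, ContDiff ℝ k f → Function.Periodic f 1 →
      ContDiff ℝ k (L f) ∧ Function.Periodic (L f) 1)
    (hL_dual : ∀ f g, ContDiff ℝ k f → Function.Periodic f 1 →
      Continuous g → Function.Periodic g 1 →
      (∫ x in (0:ℝ)..1, L f x * g x) = ∫ x in (0:ℝ)..1, f x * g (T x)) :
    ∃ A B : ℝ, 0 ≤ A ∧ 0 ≤ B ∧
      ∀ n : ℕ, ∀ f, ContDiff ℝ k f → Function.Periodic f 1 →
        sobNorm (k - 1) (L^[n] f) ≤ A * sobNorm (k - 1) f ∧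
        sobNorm k (L^[n] f) ≤ α ^ (k * n) * sobNorm k f + B * sobNorm (k - 1) f := by
  -- basic consequences of the hypotheses
  have hT1 : ContDiff ℝ ((k:WithTop ℕ∞) + 1) T := by exact_mod_cast hT
  have hTd : Differentiable ℝ T := (contDiff_succ_iff_deriv.mp hT1).1
  have hT' : ContDiff ℝ k (deriv T) := (contDiff_succ_iff_deriv.mp hT1).2.2
  have hT'c : Continuous (deriv T) := hT'.continuous
  have hne : ∀ x, deriv T x ≠ 0 := by
    intro x hx
    have h1 := hTexp x
    rw [hx] at h1
    simp only [abs_zero] at h1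
    have : (0:ℝ) < α⁻¹ := by positivity
    linarith
  have hu : ContDiff ℝ k (fun x => (deriv T x)⁻¹) := hT'.inv hne
  have hT'per : Function.Periodic (deriv T) 1 := by
    intro x
    have h1 : (fun y => T (y + 1)) = fun y => T y + (d:ℝ) := funext fun y => hTlift y
    calc deriv T (x + 1) = deriv (fun y => T (y + 1)) x := (deriv_comp_add_const ..).symm
      _ = deriv (fun y => T y + (d:ℝ)) x := by rw [h1]
      _ = deriv T x := by simp
  have huper : Function.Periodic (fun x => (deriv T x)⁻¹) 1 := fun x => by simp [hT'per x]
  have huα : ∀ x, |(deriv T x)⁻¹| ≤ α := by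
    intro x
    rw [abs_inv]
    exact inv_le_of_inv_le₀ hα0 (hTexp x)
  obtain ⟨U, hU0, hU⟩ := deriv_bounds_exist hu huper
  -- closure of C^k periodic functions under L-iterates
  have hLiter : ∀ n f, ContDiff ℝ k f → Function.Periodic f 1 →
      ContDiff ℝ k (L^[n] f) ∧ Function.Periodic (L^[n] f) 1 := by
    intro n
    induction n with
    | zero => intro f hf hfper; simpa using ⟨hf, hfper⟩
    | succ n ih =>
      intro f hf hfper
      rw [Function.iterate_succ_apply']
      exact hL_smooth _ (ih f hf hfper).1 (ih f hf hfper).2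
  -- the one-step inequality at each level j ≤ k
  have hOS : ∀ j, j ≤ k → ∃ C : ℝ, 0 ≤ C ∧ ∀ f, ContDiff ℝ k f → Function.Periodic f 1 →
      (∫ x in (0:ℝ)..1, |iteratedDeriv j (L f) x|)
        ≤ α^j * (∫ x in (0:ℝ)..1, |iteratedDeriv j f x|)
          + C * ∑ i ∈ Finset.range j, ∫ x in (0:ℝ)..1, |iteratedDeriv i f x| := by
    intro j hj
    obtain ⟨C, hC0, hC⟩ := pop_iter_bound hα0.le hU0 hu huα hU j hj
    refine ⟨C, hC0, fun f hf hfper => ?_⟩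
    have h1 := transfer_deriv_norm_le k hTd hT'c hne hu hT'per hTlift hk hf hfper
      (hL_smooth f hf hfper).1 (hL_smooth f hf hfper).2
      (fun g hgc hgper => hL_dual f g hf hfper hgc hgper) j hj
    exact h1.trans (hC f (hf.of_le (by exact_mod_cast hj)))
  -- main induction on the level j
  have main : ∀ j, j ≤ k → ∃ A B : ℝ, 0 ≤ A ∧ 0 ≤ B ∧
      ∀ n f, ContDiff ℝ k f → Function.Periodic f 1 →
        sobNorm j (L^[n] f) ≤ A * sobNorm j f ∧
        (∫ x in (0:ℝ)..1, |iteratedDeriv j (L^[n] f) x|)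
          ≤ α^(j*n) * (∫ x in (0:ℝ)..1, |iteratedDeriv j f x|)
            + B * ∑ i ∈ Finset.range j, ∫ x in (0:ℝ)..1, |iteratedDeriv i f x| := by
    intro j
    induction j with
    | zero =>
      intro _
      refine ⟨1, 0, zero_le_one, le_rfl, ?_⟩
      intro n f hf hfper
      have hbase : ∀ n, (∫ x in (0:ℝ)..1, |(L^[n] f) x|) ≤ ∫ x in (0:ℝ)..1, |f x| := by
        intro n
        induction n with
        | zero => simp
        | succ n ihn =>
          rw [Function.iterate_succ_apply']
          obtain ⟨C, hC0, hC⟩ := hOS 0 (by omega)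
          have h1 := hC (L^[n] f) (hLiter n f hf hfper).1 (hLiter n f hf hfper).2
          simp only [pow_zero, one_mul, Finset.range_zero, Finset.sum_empty, mul_zero,
            add_zero, iteratedDeriv_zero] at h1
          exact h1.trans ihn
      have e1 : ∀ g : ℝ → ℝ, sobNorm 0 g = ∫ x in (0:ℝ)..1, |g x| := by
        intro g; simp [sobNorm_def]
      constructor
      · rw [e1, e1, one_mul]
        exact hbase n
      · simpa using hbase n
    | succ j ihj =>
      intro hjk
      obtain ⟨A, B, hA0, hB0, hAB⟩ := ihj (by omega)
      obtain ⟨C, hC0, hC⟩ := hOS (j+1) hjk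
      have h1α : 0 < 1 - α^(j+1) := by
        have : α^(j+1) < 1 := pow_lt_one₀ hα0.le hα1 (by omega)
        linarith
      set B' : ℝ := C * A / (1 - α^(j+1)) with hB'
      have hB'0 : 0 ≤ B' := by positivity
      have hkey : α^(j+1) * B' + C * A ≤ B' := by
        have h2 : B' * (1 - α^(j+1)) = C * A := div_mul_cancel₀ _ h1α.ne'
        nlinarith
      have htop : ∀ n f, ContDiff ℝ k f → Function.Periodic f 1 →
          (∫ x in (0:ℝ)..1, |iteratedDeriv (j+1) (L^[n] f) x|)
            ≤ α^((j+1)*n) * (∫ x in (0:ℝ)..1, |iteratedDeriv (j+1) f x|)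
              + B' * ∑ i ∈ Finset.range (j+1), ∫ x in (0:ℝ)..1, |iteratedDeriv i f x| := by
        intro n
        induction n with
        | zero =>
          intro f hf hfper
          have hS0 : 0 ≤ ∑ i ∈ Finset.range (j+1), ∫ x in (0:ℝ)..1, |iteratedDeriv i f x| :=
            Finset.sum_nonneg (fun i _ => integral_abs_nonneg _)
          simp only [Function.iterate_zero_apply, Nat.mul_zero, pow_zero, one_mul]
          nlinarith
        | succ n ihn =>
          intro f hf hfper
          set S : ℝ := ∑ i ∈ Finset.range (j+1), ∫ x in (0:ℝ)..1, |iteratedDeriv i f x| with hS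
          set X : ℝ := ∫ x in (0:ℝ)..1, |iteratedDeriv (j+1) f x| with hX
          have hS0 : 0 ≤ S := Finset.sum_nonneg (fun i _ => integral_abs_nonneg _)
          have hX0 : 0 ≤ X := integral_abs_nonneg _
          rw [Function.iterate_succ_apply']
          have h2 := hC (L^[n] f) (hLiter n f hf hfper).1 (hLiter n f hf hfper).2
          have h3 : (∑ i ∈ Finset.range (j+1), ∫ x in (0:ℝ)..1, |iteratedDeriv i (L^[n] f) x|)
              ≤ A * S := by
            have h4 : (∑ i ∈ Finset.range (j+1),
                ∫ x in (0:ℝ)..1, |iteratedDeriv i (L^[n] f) x|) = sobNorm j (L^[n] f) := rfl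
            have h5 : S = sobNorm j f := rfl
            rw [h4, h5]
            exact (hAB n f hf hfper).1
          have h6 := ihn f hf hfper
          calc (∫ x in (0:ℝ)..1, |iteratedDeriv (j+1) (L (L^[n] f)) x|)
              ≤ α^(j+1) * (∫ x in (0:ℝ)..1, |iteratedDeriv (j+1) (L^[n] f) x|)
                + C * ∑ i ∈ Finset.range (j+1),
                    ∫ x in (0:ℝ)..1, |iteratedDeriv i (L^[n] f) x| := h2
            _ ≤ α^(j+1) * (α^((j+1)*n) * X + B' * S) + C * (A * S) := by
                apply add_le_add
                · exact mul_le_mul_of_nonneg_left h6 (by positivity)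
                · exact mul_le_mul_of_nonneg_left h3 hC0
            _ = α^((j+1)*(n+1)) * X + (α^(j+1) * B' + C * A) * S := by
                rw [show (j+1)*(n+1) = (j+1)*n + (j+1) by ring, pow_add]
                ring
            _ ≤ α^((j+1)*(n+1)) * X + B' * S := by
                nlinarith [mul_le_mul_of_nonneg_right hkey hS0]
      refine ⟨A + B' + 1, B', by positivity, hB'0, ?_⟩
      intro n f hf hfper
      refine ⟨?_, htop n f hf hfper⟩
      have h7 := (hAB n f hf hfper).1
      have h8 := htop n f hf hfper
      have hSsob : (∑ i ∈ Finset.range (j+1), ∫ x in (0:ℝ)..1, |iteratedDeriv i f x|)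
          = sobNorm j f := rfl
      rw [hSsob] at h8
      have hmono : sobNorm j f ≤ sobNorm (j+1) f := sobNorm_mono (by omega) f
      have hterm : (∫ x in (0:ℝ)..1, |iteratedDeriv (j+1) f x|) ≤ sobNorm (j+1) f :=
        term_le_sobNorm le_rfl f
      have hpow1 : α^((j+1)*n) ≤ 1 := pow_le_one₀ hα0.le hα1.le
      have hnn : 0 ≤ sobNorm j f := sobNorm_nonneg _ _
      have hnn2 : 0 ≤ sobNorm (j+1) f := sobNorm_nonneg _ _
      have hint0 : 0 ≤ ∫ x in (0:ℝ)..1, |iteratedDeriv (j+1) f x| := integral_abs_nonneg _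
      rw [sobNorm_succ]
      calc sobNorm j (L^[n] f) + ∫ y in (0:ℝ)..1, |iteratedDeriv (j+1) (L^[n] f) y|
          ≤ A * sobNorm j f
            + (α^((j+1)*n) * (∫ x in (0:ℝ)..1, |iteratedDeriv (j+1) f x|) + B' * sobNorm j f) :=
            add_le_add h7 h8
        _ ≤ A * sobNorm (j+1) f + (1 * sobNorm (j+1) f + B' * sobNorm (j+1) f) := by
            apply add_le_add
            · exact mul_le_mul_of_nonneg_left hmono hA0
            · apply add_le_add
              · calc α^((j+1)*n) * (∫ x in (0:ℝ)..1, |iteratedDeriv (j+1) f x|)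
                    ≤ 1 * (∫ x in (0:ℝ)..1, |iteratedDeriv (j+1) f x|) :=
                      mul_le_mul_of_nonneg_right hpow1 hint0
                  _ ≤ 1 * sobNorm (j+1) f := by linarith
              · exact mul_le_mul_of_nonneg_left hmono hB'0
        _ = (A + B' + 1) * sobNorm (j+1) f := by ring
  -- assemble the final statement
  obtain ⟨A1, B1, hA10, hB10, hmain1⟩ := main (k-1) (by omega)
  obtain ⟨A2, B2, hA20, hB20, hmain2⟩ := main k le_rfl
  refine ⟨A1, A1 + B2, hA10, by positivity, ?_⟩
  intro n f hf hfper
  refine ⟨(hmain1 n f hf hfper).1, ?_⟩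
  have hk1 : k - 1 + 1 = k := by omega
  have h8 := (hmain2 n f hf hfper).2
  have hSsob : (∑ i ∈ Finset.range k, ∫ x in (0:ℝ)..1, |iteratedDeriv i f x|)
      = sobNorm (k-1) f := by
    rw [sobNorm_def, hk1]
  rw [hSsob] at h8
  have hterm : (∫ x in (0:ℝ)..1, |iteratedDeriv k f x|) ≤ sobNorm k f :=
    term_le_sobNorm le_rfl f
  have hsplit : sobNorm k (L^[n] f) = sobNorm (k-1) (L^[n] f)
      + ∫ y in (0:ℝ)..1, |iteratedDeriv k (L^[n] f) y| := by
    conv_lhs => rw [← hk1]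
    rw [sobNorm_succ, hk1]
  have h7 := (hmain1 n f hf hfper).1
  have hpow0 : 0 ≤ α^(k*n) := by positivity
  rw [hsplit]
  calc sobNorm (k-1) (L^[n] f) + ∫ y in (0:ℝ)..1, |iteratedDeriv k (L^[n] f) y|
      ≤ A1 * sobNorm (k-1) f
        + (α^(k*n) * (∫ x in (0:ℝ)..1, |iteratedDeriv k f x|) + B2 * sobNorm (k-1) f) :=
        add_le_add h7 h8
    _ ≤ A1 * sobNorm (k-1) f + (α^(k*n) * sobNorm k f + B2 * sobNorm (k-1) f) := by
        have := mul_le_mul_of_nonneg_left hterm hpow0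
        linarith
    _ = α^(k*n) * sobNorm k f + (A1 + B2) * sobNorm (k-1) f := by ring
end

section
/- Let f ∈ W^{1,1}(S¹) and H : S¹ → S¹ an orientation-preserving homeomorphism. Then ‖f∘H − f‖_{L¹} ≤ ‖H^{-1} − Id‖_∞ ‖f'‖_{L¹}. -/
open Real Filter Topology MeasureTheory intervalIntegral Set

lemma my_ae_comp_add {P : ℝ → Prop} (c : ℝ) (h : ∀ᵐ t : ℝ, P t) :
    ∀ᵐ t : ℝ, P (t + c) := by
  rw [Filter.eventually_iff, mem_ae_iff] at h ⊢
  have he : {t : ℝ | P (t + c)}ᶜ = (fun t => t + c) ⁻¹' {t : ℝ | P t}ᶜ := rfl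
  rw [he]
  exact (measurePreserving_add_right volume c).quasiMeasurePreserving.preimage_null h

lemma my_ae_eq_zero_of_intervalIntegral (h : ℝ → ℝ)
    (hint : ∀ a b : ℝ, IntervalIntegrable h volume a b)
    (hz : ∀ a b : ℝ, (∫ t in a..b, h t) = 0) :
    ∀ᵐ t : ℝ, h t = 0 := by
  have hloc : LocallyIntegrable h volume := by
    rw [locallyIntegrable_iff]
    intro K hK
    obtain ⟨r, hr0, hr⟩ := hK.isBounded.subset_closedBall_lt 0 0
    refine IntegrableOn.mono_set ?_ (hr.trans_eq Real.closedBall_eq_Icc)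
    exact (intervalIntegrable_iff_integrableOn_Icc_of_le (by linarith)).mp (hint _ _)
  filter_upwards [IsUnifLocDoublingMeasure.ae_tendsto_average (μ := volume) hloc 1] with x hx
  have h1 : Tendsto (fun j : ℝ => ⨍ y in Metric.closedBall x j, h y) (𝓝[>] (0:ℝ)) (𝓝 (h x)) := by
    refine hx (fun _ => x) id tendsto_id ?_
    filter_upwards [self_mem_nhdsWithin] with j (hj : 0 < j)
    exact Metric.mem_closedBall_self (by simp only [id_eq]; linarith)
  have h2 : Tendsto (fun j : ℝ => ⨍ y in Metric.closedBall x j, h y) (𝓝[>] (0:ℝ)) (𝓝 0) := by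
    have he : (fun _ : ℝ => (0:ℝ)) =ᶠ[𝓝[>] (0:ℝ)]
        fun j : ℝ => ⨍ y in Metric.closedBall x j, h y := by
      filter_upwards [self_mem_nhdsWithin] with j (hj : 0 < j)
      have hi : ∫ y in Metric.closedBall x j, h y = 0 := by
        rw [Real.closedBall_eq_Icc, MeasureTheory.integral_Icc_eq_integral_Ioc,
          ← intervalIntegral.integral_of_le (by linarith : x - j ≤ x + j)]
        exact hz _ _
      rw [setAverage_eq, hi, smul_zero]
    exact Tendsto.congr' he tendsto_const_nhds
  exact tendsto_nhds_unique h1 h2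


/-- **`L¹` modulus of continuity of a `W^{1,1}` function under composition with
a homeomorphism** : `‖f∘H - f‖_{L¹} ≤ ‖H⁻¹ - Id‖_∞ ‖f'‖_{L¹}`.
The circle is modeled by `1`-periodic functions; `f ∈ W^{1,1}(S¹)` is an
absolutely continuous periodic function given as the integral of its
derivative `g ∈ L¹`; `H` is (the lift of) an orientation-preserving
homeomorphism of the circle with inverse `Hinv`. -/
theorem W11_composition_estimate
    (f g : ℝ → ℝ)
    (hf_per : Function.Periodic f 1)
    (hg_int : ∀ a b : ℝ, IntervalIntegrable g volume a b)
    (hfg : ∀ a b : ℝ, f b - f a = ∫ t in a..b, g t)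
    (H Hinv : ℝ → ℝ)
    (hH_cont : Continuous H) (hH_mono : StrictMono H)
    (hH_lift : ∀ x : ℝ, H (x + 1) = H x + 1)
    (hHinv : Function.LeftInverse Hinv H ∧ Function.RightInverse Hinv H)
    (ε : ℝ) (hε : ∀ x : ℝ, |Hinv x - x| ≤ ε) :
    (∫ x in (0:ℝ)..1, |f (H x) - f x|) ≤ ε * ∫ x in (0:ℝ)..1, |g x| := by
  obtain ⟨hL, hR⟩ := hHinv
  have hε0 : 0 ≤ ε := le_trans (abs_nonneg _) (hε 0)
  -- a measurable representative of g
  have hgm : AEMeasurable g volume := by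
    have h1 : ∀ n : ℕ, AEStronglyMeasurable g (volume.restrict (Ioc (-(n:ℝ)) (n:ℝ))) :=
      fun n => ((hg_int (-(n:ℝ)) n).1).aestronglyMeasurable
    have hU : (⋃ n : ℕ, Ioc (-(n:ℝ)) (n:ℝ)) = univ := by
      refine eq_univ_iff_forall.mpr fun x => mem_iUnion.mpr ?_
      refine ⟨⌊|x|⌋₊ + 1, ?_, ?_⟩
      · push_cast
        nlinarith [Nat.lt_floor_add_one |x|, abs_nonneg x, neg_abs_le x]
      · push_cast
        nlinarith [Nat.lt_floor_add_one |x|, le_abs_self x]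
    have h2 := aestronglyMeasurable_iUnion_iff.mpr h1
    rw [hU, Measure.restrict_univ] at h2
    exact h2.aemeasurable
  set g' : ℝ → ℝ := hgm.mk g with hg'def
  have hg'm : Measurable g' := hgm.measurable_mk
  have hgg' : g =ᵐ[volume] g' := hgm.ae_eq_mk
  -- H commutes with integer translations
  have hH1 : ∀ x : ℝ, H (x - 1) = H x - 1 := by
    intro x
    have := hH_lift (x - 1)
    simp only [sub_add_cancel] at this
    linarith
  have hHz : ∀ (n : ℤ) (x : ℝ), H (x + n) = H x + n := by
    intro n
    induction n using Int.induction_on with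
    | zero => simp
    | succ k ih =>
      intro x
      push_cast
      rw [show x + ((k:ℝ) + 1) = (x + (k:ℝ)) + 1 by ring, hH_lift]
      have := ih x
      push_cast at this
      rw [this]; ring
    | pred k ih =>
      intro x
      push_cast
      rw [show x + (-(k:ℝ) - 1) = (x + -(k:ℝ)) - 1 by ring, hH1]
      have := ih x
      push_cast at this
      rw [this]; ring
  -- f is continuous
  have hf_cont : Continuous f := by
    have hc : Continuous fun b => f 0 + ∫ t in (0:ℝ)..b, g t :=
      continuous_const.add (intervalIntegral.continuous_primitive hg_int 0)
    refine hc.congr fun b => ?_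
    have := hfg 0 b
    linarith
  -- g is a.e. periodic
  have hper : ∀ᵐ t : ℝ, g (t + 1) = g t := by
    have hint : ∀ a b : ℝ, IntervalIntegrable (fun t => g (t + 1) - g t) volume a b := by
      intro a b
      have h1 : IntervalIntegrable (fun t => g (t + 1)) volume a b := by
        simpa using (hg_int (a + 1) (b + 1)).comp_add_right 1
      exact h1.sub (hg_int a b)
    have hz : ∀ a b : ℝ, (∫ t in a..b, (g (t + 1) - g t)) = 0 := by
      intro a b
      have h1 : IntervalIntegrable (fun t => g (t + 1)) volume a b := by
        simpa using (hg_int (a + 1) (b + 1)).comp_add_right 1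
      rw [intervalIntegral.integral_sub h1 (hg_int a b)]
      have h2 : (∫ t in a..b, g (t + 1)) = ∫ t in (a+1)..(b+1), g t :=
        intervalIntegral.integral_comp_add_right g 1
      have h3 : (∫ t in (a+1)..(b+1), g t) = f (b+1) - f (a+1) := (hfg _ _).symm
      have h4 : (∫ t in a..b, g t) = f b - f a := (hfg _ _).symm
      rw [h2, h3, h4, hf_per b, hf_per a]
      ring
    filter_upwards [my_ae_eq_zero_of_intervalIntegral _ hint hz] with t ht
    linarith
  have hper' : ∀ᵐ t : ℝ, g' (t + 1) = g' t := by
    filter_upwards [hper, hgg', my_ae_comp_add 1 hgg'] with t h1 h2 h3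
    rw [← h3, h1, h2]
  have hperZ : ∀ n : ℤ, ∀ᵐ t : ℝ, g' (t + n) = g' t := by
    intro n
    induction n using Int.induction_on with
    | zero => simp
    | succ k ih =>
      filter_upwards [my_ae_comp_add (k:ℝ) hper', ih] with t h1 h2
      push_cast
      rw [show t + ((k:ℝ) + 1) = t + (k:ℝ) + 1 by ring, h1]
      push_cast at h2
      exact h2
    | pred k ih =>
      filter_upwards [my_ae_comp_add (-(k:ℝ) - 1) hper', ih] with t h1 h2
      push_cast
      push_cast at h2
      rw [show t + (-(k:ℝ) - 1) + 1 = t + -(k:ℝ) by ring] at h1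
      exact h1.symm.trans h2
  -- notation
  set Gm : ℝ → ENNReal := fun t => ENNReal.ofReal |g' t| with hGmdef
  have hGmm : Measurable Gm := hg'm.abs.ennreal_ofReal
  have hGper : ∀ n : ℤ, ∀ᵐ t : ℝ, Gm (t + n) = Gm t := by
    intro n
    filter_upwards [hperZ n] with t ht
    simp only [hGmdef, ht]
  set A : Set (ℝ × ℝ) := {p | p.2 ∈ Set.uIoc p.1 (H p.1)} with hAdef
  have hA : MeasurableSet A := by
    have hrepr : A = ({p : ℝ × ℝ | p.1 < p.2} ∩ {p : ℝ × ℝ | p.2 ≤ H p.1}) ∪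
        ({p : ℝ × ℝ | H p.1 < p.2} ∩ {p : ℝ × ℝ | p.2 ≤ p.1}) := by
      ext p
      simp [hAdef, Set.mem_uIoc]
    rw [hrepr]
    have hHm : Measurable fun p : ℝ × ℝ => H p.1 := hH_cont.measurable.comp measurable_fst
    exact ((measurableSet_lt measurable_fst measurable_snd).inter
        (measurableSet_le measurable_snd hHm)).union
      ((measurableSet_lt hHm measurable_snd).inter
        (measurableSet_le measurable_snd measurable_fst))
  set S : ℝ → Set ℝ := fun t => {x | t ∈ Set.uIoc x (H x)} with hSdef
  have hSt : ∀ t, S t = (fun x => (x, t)) ⁻¹' A := fun t => rfl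
  have hS : ∀ t, MeasurableSet (S t) := by
    intro t
    rw [hSt t]
    exact (measurable_id.prodMk measurable_const) hA
  set M : ℝ → ENNReal := fun t => volume (S t ∩ Ioc (0:ℝ) 1) with hMdef
  have hMm : Measurable M := by
    have h1 : Measurable fun t : ℝ => (volume.restrict (Ioc (0:ℝ) 1)) ((fun x => (x, t)) ⁻¹' A) :=
      measurable_measure_prodMk_right hA
    have hMeq : M = fun t : ℝ => (volume.restrict (Ioc (0:ℝ) 1)) ((fun x => (x, t)) ⁻¹' A) := by
      funext t
      rw [hMdef, ← hSt t, Measure.restrict_apply (hS t)]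
    rw [hMeq]
    exact h1
  -- pointwise bound
  have key1 : ∀ x : ℝ, ENNReal.ofReal |f (H x) - f x| ≤ ∫⁻ t in Set.uIoc x (H x), Gm t := by
    intro x
    have hio : IntegrableOn g' (Set.uIoc x (H x)) volume :=
      (intervalIntegrable_iff.mp (hg_int x (H x))).congr (ae_restrict_of_ae hgg')
    have habs : IntegrableOn (fun t => |g' t|) (Set.uIoc x (H x)) volume := hio.abs
    have heq : f (H x) - f x = ∫ t in x..(H x), g' t := by
      rw [hfg x (H x)]
      exact intervalIntegral.integral_congr_ae (by filter_upwards [hgg'] with t ht _ using ht)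
    calc ENNReal.ofReal |f (H x) - f x|
        ≤ ENNReal.ofReal (∫ t in Set.uIoc x (H x), |g' t|) := by
          apply ENNReal.ofReal_le_ofReal
          rw [heq]
          have h5 := intervalIntegral.norm_integral_le_integral_norm_uIoc
            (f := g') (a := x) (b := H x) (μ := volume)
          simpa [Real.norm_eq_abs] using h5
      _ = ∫⁻ t in Set.uIoc x (H x), Gm t := by
          rw [ofReal_integral_eq_lintegral_ofReal habs (ae_of_all _ fun t => abs_nonneg _)]
  -- the kernel
  set kk : ℝ × ℝ → ENNReal := A.indicator (fun q => Gm q.2) with hkkdef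
  have hkkm : Measurable kk := (hGmm.comp measurable_snd).indicator hA
  have hkk1 : ∀ x : ℝ, (∫⁻ t, kk (x, t)) = ∫⁻ t in Set.uIoc x (H x), Gm t := by
    intro x
    have h1 : (fun t => kk (x, t)) = (Set.uIoc x (H x)).indicator Gm := by
      funext t
      by_cases h : t ∈ Set.uIoc x (H x)
      · rw [Set.indicator_of_mem h, hkkdef, Set.indicator_of_mem (show (x, t) ∈ A from h)]
      · rw [Set.indicator_of_notMem h, hkkdef, Set.indicator_of_notMem (show (x, t) ∉ A from h)]
    rw [h1, lintegral_indicator measurableSet_uIoc Gm]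
  have hkk2 : ∀ t : ℝ, (∫⁻ x in Ioc (0:ℝ) 1, kk (x, t)) = Gm t * M t := by
    intro t
    have h1 : (fun x => kk (x, t)) = (S t).indicator (fun _ => Gm t) := by
      funext x
      by_cases h : x ∈ S t
      · rw [Set.indicator_of_mem h, hkkdef, Set.indicator_of_mem (show (x, t) ∈ A from h)]
      · rw [Set.indicator_of_notMem h, hkkdef, Set.indicator_of_notMem (show (x, t) ∉ A from h)]
    rw [h1, lintegral_indicator_const (hS t), Measure.restrict_apply (hS t), hMdef]
  have swap : (∫⁻ x in Ioc (0:ℝ) 1, ∫⁻ t, kk (x, t)) = ∫⁻ t, ∫⁻ x in Ioc (0:ℝ) 1, kk (x, t) :=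
    lintegral_lintegral_swap hkkm.aemeasurable
  -- translation structure
  have hmemtrans : ∀ (n : ℤ) (t x : ℝ), x ∈ S (t + n) ↔ x - n ∈ S t := by
    intro n t x
    have hHxn : H (x - n) = H x - n := by
      have h2 := hHz (-n) x
      push_cast at h2
      rw [show x + -(n:ℝ) = x - n by ring] at h2
      rw [h2]; ring
    simp only [hSdef, Set.mem_setOf_eq, Set.mem_uIoc, hHxn]
    constructor
    · rintro (⟨h1, h2⟩ | ⟨h1, h2⟩)
      · left; constructor <;> linarith
      · right; constructor <;> linarith
    · rintro (⟨h1, h2⟩ | ⟨h1, h2⟩)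
      · left; constructor <;> linarith
      · right; constructor <;> linarith
  have hMtrans : ∀ (n : ℤ) (t : ℝ), M (t + n) = volume (S t ∩ Ioc (-(n:ℝ)) (1 - n)) := by
    intro n t
    have h1 : S (t + n) ∩ Ioc (0:ℝ) 1 = (fun x : ℝ => x - n) ⁻¹' (S t ∩ Ioc (-(n:ℝ)) (1 - n)) := by
      ext x
      simp only [Set.mem_inter_iff, Set.mem_preimage, Set.mem_Ioc, hmemtrans n t x]
      constructor
      · rintro ⟨ha, hb, hc⟩; exact ⟨ha, by linarith, by linarith⟩
      · rintro ⟨ha, hb, hc⟩; exact ⟨ha, by linarith, by linarith⟩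
    simp only [hMdef]
    rw [h1]
    exact (measurePreserving_sub_right volume (n:ℝ)).measure_preimage
      ((hS t).inter measurableSet_Ioc).nullMeasurableSet
  have hSsub : ∀ t : ℝ, S t ⊆ uIcc t (Hinv t) := by
    intro t x hx
    simp only [hSdef, Set.mem_setOf_eq, Set.mem_uIoc] at hx
    rw [Set.mem_uIcc]
    rcases hx with ⟨h1, h2⟩ | ⟨h1, h2⟩
    · right
      refine ⟨?_, h1.le⟩
      have h3 : H (Hinv t) ≤ H x := by rw [hR t]; exact h2
      exact hH_mono.le_iff_le.mp h3
    · left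
      refine ⟨h2, ?_⟩
      have h3 : H x ≤ H (Hinv t) := by rw [hR t]; exact h1.le
      exact hH_mono.le_iff_le.mp h3
  have hIocdisj : Pairwise (Function.onFun Disjoint fun n : ℤ => Ioc ((n:ℝ)) ((n:ℝ) + 1)) := by
    intro m n hmn
    refine Set.disjoint_left.mpr ?_
    rintro x ⟨h1, h2⟩ ⟨h3, h4⟩
    rcases lt_or_gt_of_ne hmn with h | h
    · have h5 : (m:ℝ) + 1 ≤ (n:ℝ) := by exact_mod_cast Int.add_one_le_iff.mpr h
      linarith
    · have h5 : (n:ℝ) + 1 ≤ (m:ℝ) := by exact_mod_cast Int.add_one_le_iff.mpr h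
      linarith
  have hMsum : ∀ t : ℝ, (∑' n : ℤ, M (t + n)) ≤ ENNReal.ofReal ε := by
    intro t
    have e1 : (∑' n : ℤ, M (t + n)) = ∑' n : ℤ, volume (S t ∩ Ioc ((n:ℝ)) ((n:ℝ) + 1)) := by
      rw [← (Equiv.neg ℤ).tsum_eq (fun n : ℤ => volume (S t ∩ Ioc ((n:ℝ)) ((n:ℝ) + 1)))]
      refine tsum_congr fun n => ?_
      rw [hMtrans n t]
      have e2 : Ioc (-(n:ℝ)) (1 - (n:ℝ)) = Ioc (((Equiv.neg ℤ n : ℤ) : ℝ)) (((Equiv.neg ℤ n : ℤ) : ℝ) + 1) := by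
        simp only [Equiv.neg_apply, Int.cast_neg]
        congr 1
        ring
      rw [e2]
    rw [e1, ← measure_iUnion (fun m n hmn => (hIocdisj hmn).mono inter_subset_right inter_subset_right)
        (fun n => (hS t).inter measurableSet_Ioc)]
    rw [← Set.inter_iUnion, iUnion_Ioc_intCast, Set.inter_univ]
    calc volume (S t) ≤ volume (uIcc t (Hinv t)) := measure_mono (hSsub t)
      _ = ENNReal.ofReal |Hinv t - t| := Real.volume_interval
      _ ≤ ENNReal.ofReal ε := ENNReal.ofReal_le_ofReal (hε t)
  have hpart : (∫⁻ t, Gm t * M t) = ∑' n : ℤ, ∫⁻ t in Ioc ((n:ℝ)) ((n:ℝ) + 1), Gm t * M t := by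
    rw [← setLIntegral_univ, ← iUnion_Ioc_intCast (α := ℝ),
      lintegral_iUnion (fun n => measurableSet_Ioc) hIocdisj]
  have hshift : ∀ n : ℤ, (∫⁻ t in Ioc ((n:ℝ)) ((n:ℝ) + 1), Gm t * M t)
      = ∫⁻ t in Ioc (0:ℝ) 1, Gm (t + n) * M (t + n) := by
    intro n
    have hpre : (fun t : ℝ => t + (n:ℝ)) ⁻¹' Ioc ((n:ℝ)) ((n:ℝ) + 1) = Ioc (0:ℝ) 1 := by
      ext y
      simp only [Set.mem_preimage, Set.mem_Ioc]
      constructor <;> rintro ⟨h1, h2⟩ <;> constructor <;> linarith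
    have h2 := (measurePreserving_add_right volume (n:ℝ)).setLIntegral_comp_preimage_emb
      (MeasurableEquiv.addRight (n:ℝ)).measurableEmbedding (fun t => Gm t * M t)
      (Ioc ((n:ℝ)) ((n:ℝ) + 1))
    rw [hpre] at h2
    exact h2.symm
  have step6 : (∫⁻ t, Gm t * M t) ≤ ENNReal.ofReal ε * ∫⁻ t in Ioc (0:ℝ) 1, Gm t := by
    calc (∫⁻ t, Gm t * M t)
        = ∑' n : ℤ, ∫⁻ t in Ioc ((n:ℝ)) ((n:ℝ) + 1), Gm t * M t := hpart
      _ = ∑' n : ℤ, ∫⁻ t in Ioc (0:ℝ) 1, Gm (t + n) * M (t + n) := tsum_congr hshift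
      _ = ∑' n : ℤ, ∫⁻ t in Ioc (0:ℝ) 1, Gm t * M (t + n) := by
          refine tsum_congr fun n => lintegral_congr_ae ?_
          filter_upwards [ae_restrict_of_ae (hGper n)] with t ht
          rw [ht]
      _ = ∫⁻ t in Ioc (0:ℝ) 1, ∑' n : ℤ, Gm t * M (t + n) := by
          refine (lintegral_tsum fun n => ?_).symm
          exact (hGmm.mul (hMm.comp (measurable_add_const (n:ℝ)))).aemeasurable
      _ ≤ ∫⁻ t in Ioc (0:ℝ) 1, Gm t * ENNReal.ofReal ε := by
          refine lintegral_mono fun t => ?_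
          rw [ENNReal.tsum_mul_left]
          exact mul_le_mul_right (hMsum t) _
      _ = ENNReal.ofReal ε * ∫⁻ t in Ioc (0:ℝ) 1, Gm t := by
          simp_rw [mul_comm (Gm _) (ENNReal.ofReal ε)]
          exact lintegral_const_mul _ hGmm
  have hRHS : (∫⁻ t in Ioc (0:ℝ) 1, Gm t) = ENNReal.ofReal (∫ x in (0:ℝ)..1, |g x|) := by
    have habs : IntegrableOn (fun t => |g' t|) (Ioc (0:ℝ) 1) volume :=
      (((hg_int 0 1).1).congr (ae_restrict_of_ae hgg')).abs
    rw [intervalIntegral.integral_of_le zero_le_one]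
    have hcongr : (∫ x in Ioc (0:ℝ) 1, |g x|) = ∫ x in Ioc (0:ℝ) 1, |g' x| := by
      refine integral_congr_ae ?_
      filter_upwards [ae_restrict_of_ae hgg'] with x hx
      rw [hx]
    rw [hcongr, ofReal_integral_eq_lintegral_ofReal habs (ae_of_all _ fun t => abs_nonneg _)]
  have key2 : (∫ x in (0:ℝ)..1, |f (H x) - f x|)
      = (∫⁻ x in Ioc (0:ℝ) 1, ENNReal.ofReal |f (H x) - f x|).toReal := by
    have hFc : Continuous fun x => |f (H x) - f x| := ((hf_cont.comp hH_cont).sub hf_cont).abs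
    rw [intervalIntegral.integral_of_le zero_le_one,
      integral_eq_lintegral_of_nonneg_ae (ae_of_all _ fun x => abs_nonneg _)
        hFc.aestronglyMeasurable.restrict]
  have chain : (∫⁻ x in Ioc (0:ℝ) 1, ENNReal.ofReal |f (H x) - f x|)
      ≤ ENNReal.ofReal ε * ENNReal.ofReal (∫ x in (0:ℝ)..1, |g x|) := by
    calc (∫⁻ x in Ioc (0:ℝ) 1, ENNReal.ofReal |f (H x) - f x|)
        ≤ ∫⁻ x in Ioc (0:ℝ) 1, ∫⁻ t, kk (x, t) := by
          refine lintegral_mono fun x => ?_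
          rw [hkk1 x]
          exact key1 x
      _ = ∫⁻ t, ∫⁻ x in Ioc (0:ℝ) 1, kk (x, t) := swap
      _ = ∫⁻ t, Gm t * M t := lintegral_congr fun t => hkk2 t
      _ ≤ ENNReal.ofReal ε * ∫⁻ t in Ioc (0:ℝ) 1, Gm t := step6
      _ = ENNReal.ofReal ε * ENNReal.ofReal (∫ x in (0:ℝ)..1, |g x|) := by rw [hRHS]
  have hgnn : 0 ≤ ∫ x in (0:ℝ)..1, |g x| :=
    intervalIntegral.integral_nonneg zero_le_one fun x _ => abs_nonneg _
  rw [key2]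
  calc (∫⁻ x in Ioc (0:ℝ) 1, ENNReal.ofReal |f (H x) - f x|).toReal
      ≤ (ENNReal.ofReal ε * ENNReal.ofReal (∫ x in (0:ℝ)..1, |g x|)).toReal :=
        ENNReal.toReal_mono (ENNReal.mul_ne_top ENNReal.ofReal_ne_top ENNReal.ofReal_ne_top) chain
    _ = ε * ∫ x in (0:ℝ)..1, |g x| := by
        rw [← ENNReal.ofReal_mul hε0, ENNReal.toReal_ofReal (mul_nonneg hε0 hgnn)]
end
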